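/- arXiv:2207.01049 — 4 statements merged into one kernel-verified Lean document; each statement's English description precedes it below -/
import Mathlib

section
/- Let k ≥ d+1 ≥ 4 and n > d + 2·(k-d)^2·(k^{k-d}-1)^k·k!. If F is a non-trivial d-wise intersecting family of k-element subsets of [n] with |F| > (k-d-1/2)·C(n-d, k-d), then |B^(d)| ≥ k-d, where B^(d) = {T ∈ B(F) : |T| = d}. -/
open Finset

attribute [local instance] Classical.propDecidable

/-- `F` is a family of `k`-element subsets of `[n] = {1,…,n}`. -/
def FamilyOn (n k : ℕ) (F : Finset (Finset ℕ)) : Prop :=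
  ∀ A ∈ F, A ⊆ Finset.Icc 1 n ∧ A.card = k

/-- `F` is `d`-wise intersecting: any `d` members (with repetition allowed) have a
common element. -/
def DWise (d : ℕ) (F : Finset (Finset ℕ)) : Prop :=
  ∀ f : Fin d → Finset ℕ, (∀ i, f i ∈ F) → ∃ x, ∀ i, x ∈ f i

/-- `F` is non-trivial: its members have no common element. -/
def NonTrivialFam (F : Finset (Finset ℕ)) : Prop :=
  ¬ ∃ x, ∀ A ∈ F, x ∈ A

/-- `F` is a maximal `d`-wise intersecting family of `k`-subsets of `[n]`:
adding any further `k`-subset of `[n]` destroys the `d`-wise intersecting property. -/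
def MaximalFam (n k d : ℕ) (F : Finset (Finset ℕ)) : Prop :=
  ∀ A : Finset ℕ, A ⊆ Finset.Icc 1 n → A.card = k → A ∉ F →
    ¬ DWise d (insert A F)

/-- Two families of subsets of `[n]` are isomorphic if some permutation of `[n]`
carries one onto the other. -/
def Iso (n : ℕ) (F F' : Finset (Finset ℕ)) : Prop :=
  ∃ π : Equiv.Perm ℕ, (∀ x ∈ Finset.Icc 1 n, π x ∈ Finset.Icc 1 n) ∧
    F.image (fun A => A.image π) = F'

/-- The family `H(k,d,l)` of `k`-subsets of `[n]`. -/
noncomputable def famH (n k d l : ℕ) : Finset (Finset ℕ) :=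
  ((Finset.Icc 1 n).powersetCard k).filter (fun F =>
    (Finset.Icc 1 (d-1) ⊆ F ∧ (F ∩ Finset.Icc d (d+l-1)).Nonempty) ∨
    ((F ∩ Finset.Icc 1 (d-1)).card = d-2 ∧ Finset.Icc d (d+l-1) ⊆ F))

/-- The family `G(k,d)` of `k`-subsets of `[n]`. -/
noncomputable def famG (n k d : ℕ) : Finset (Finset ℕ) :=
  ((Finset.Icc 1 n).powersetCard k).filter (fun F =>
    (Finset.Icc 1 (d-1) ⊆ F ∧ (F ∩ Finset.Icc d (k-1)).Nonempty) ∨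
    (∃ i ∈ Finset.Icc (k+2) n, F = Finset.Icc 2 k ∪ {i}) ∨
    (Finset.Icc 1 (d-1) ∪ {k, k+1} ⊆ F) ∨
    (∃ i ∈ Finset.Icc (k+2) n, F = Finset.Icc 2 (k-1) ∪ {k+1, i}) ∨
    ((F ∩ Finset.Icc 1 (d-1)).card = d-2 ∧ Finset.Icc d (k+1) ⊆ F))

/-- The family `S(k,3)` of `k`-subsets of `[n]`. -/
noncomputable def famS (n k : ℕ) : Finset (Finset ℕ) :=
  ((Finset.Icc 1 n).powersetCard k).filter (fun F =>
    (Finset.Icc 1 2 ⊆ F ∧ (F ∩ Finset.Icc 3 (k-1)).Nonempty) ∨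
    (Finset.Icc 1 2 ∪ Finset.Icc k (k+2) ⊆ F) ∨
    (∃ i ∈ ({1, 2} : Finset ℕ), insert i (Finset.Icc 3 (k-1)) ⊆ F ∧
      (F ∩ Finset.Icc k (k+2)).card = 2))

/-- The family `S1(k,3)` of `k`-subsets of `[n]`. -/
noncomputable def famS1 (n k : ℕ) : Finset (Finset ℕ) :=
  ((Finset.Icc 1 n).powersetCard k).filter (fun F =>
    ((Finset.Icc 1 2 ⊆ F ∧ (F ∩ Finset.Icc 3 (k-1)).Nonempty) ∨
      (Finset.Icc 1 2 ∪ Finset.Icc k (k+2) ⊆ F)) ∨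
    (∃ i ∈ Finset.Icc (k+1) n, F = Finset.Icc 2 k ∪ {i}) ∨
    F = Finset.Icc 2 (k+2) \ {k} ∨
    F = Finset.Icc 1 (k+1) \ {2} ∨
    F = Finset.Icc 1 (k+2) \ {2, k+1})

/-- The family `S2(k,3)` of `k`-subsets of `[n]`. -/
noncomputable def famS2 (n k : ℕ) : Finset (Finset ℕ) :=
  ((Finset.Icc 1 n).powersetCard k).filter (fun F =>
    ((Finset.Icc 1 2 ⊆ F ∧ (F ∩ Finset.Icc 3 (k-1)).Nonempty) ∨
      (Finset.Icc 1 2 ∪ Finset.Icc k (k+3) ⊆ F)) ∨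
    F = Finset.Icc 2 (k+1) ∨
    F = Finset.Icc 2 (k-1) ∪ {k+2, k+3} ∨
    F = Finset.Icc 2 k ∪ {k+3} ∨
    F = Finset.Icc 2 (k+2) \ {k} ∨
    F = Finset.Icc 3 k ∪ {1, k+2} ∨
    F = Finset.Icc 3 (k-1) ∪ {1, k+1, k+3})

/-- The family `S3(k,3)` of `k`-subsets of `[n]`. -/
noncomputable def famS3 (n k : ℕ) : Finset (Finset ℕ) :=
  ((Finset.Icc 1 n).powersetCard k).filter (fun F =>
    ((Finset.Icc 1 2 ⊆ F ∧ (F ∩ Finset.Icc 3 (k-1)).Nonempty) ∨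
      (Finset.Icc 1 2 ∪ Finset.Icc k (k+3) ⊆ F)) ∨
    F = Finset.Icc 2 k ∪ {k+2} ∨
    F = Finset.Icc 2 (k+2) \ {k} ∨
    F = Finset.Icc 2 (k-1) ∪ {k+1, k+3} ∨
    F = Finset.Icc 3 (k+1) ∪ {1} ∨
    F = Finset.Icc 3 (k-1) ∪ {1, k+1, k+2} ∨
    F = Finset.Icc 3 (k-1) ∪ {1, k+2, k+3})

/-- `n1(k,d) = d + 2(k-d)²(k^{k-d}-1)^k · k!`. -/
def nOne (k d : ℕ) : ℕ := d + 2 * (k - d)^2 * (k^(k-d) - 1)^k * Nat.factorial k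

/-- `n2(k,d)`. -/
def nTwo (k d : ℕ) : ℕ := if k = d + 1 then (d+1)^2 else nOne k d

/-- `D` is a Δ-system (sunflower) with kernel `X`. -/
def IsSunflower (D : Finset (Finset ℕ)) (X : Finset ℕ) : Prop :=
  ∀ A ∈ D, ∀ B ∈ D, A ≠ B → A ∩ B = X

/-- `B1(F)`: kernels `X ⊆ [n]` with `d ≤ |X| < k` of a Δ-system of size
`k^{|X|-d+1}` contained in `F`. -/
noncomputable def Bone (n k d : ℕ) (F : Finset (Finset ℕ)) : Finset (Finset ℕ) :=
  ((Finset.Icc 1 n).powerset).filter (fun X => d ≤ X.card ∧ X.card < k ∧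
    ∃ D ∈ F.powerset, D.card = k ^ (X.card - d + 1) ∧ IsSunflower D X)

/-- `B2(F)`: the minimal members of `B1(F)`. -/
noncomputable def Btwo (n k d : ℕ) (F : Finset (Finset ℕ)) : Finset (Finset ℕ) :=
  (Bone n k d F).filter (fun X => ∀ Y ∈ Bone n k d F, Y ⊆ X → Y = X)

/-- `B3(F)`: members of `F` containing no member of `B2(F)`. -/
noncomputable def Bthree (n k d : ℕ) (F : Finset (Finset ℕ)) : Finset (Finset ℕ) :=
  F.filter (fun A => ∀ X ∈ Btwo n k d F, ¬ X ⊆ A)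

/-- `B(F) = B2(F) ∪ B3(F)`. -/
noncomputable def famB (n k d : ℕ) (F : Finset (Finset ℕ)) : Finset (Finset ℕ) :=
  Btwo n k d F ∪ Bthree n k d F

/-- `B^{(i)}`: the members of `B(F)` of size `i`. -/
noncomputable def BI (n k d i : ℕ) (F : Finset (Finset ℕ)) : Finset (Finset ℕ) :=
  (famB n k d F).filter (fun T => T.card = i)

/-- `G` is `t`-intersecting. -/
def TInter (t : ℕ) (G : Finset (Finset ℕ)) : Prop :=
  ∀ A ∈ G, ∀ B ∈ G, t ≤ (A ∩ B).card

/-- The set of sizes of maximal non-trivial `d`-wise intersecting families of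
`k`-subsets of `[n]`. -/
def MNTSizes (n k d : ℕ) : Set ℕ :=
  {m | ∃ G : Finset (Finset ℕ), FamilyOn n k G ∧ DWise d G ∧ NonTrivialFam G ∧
        MaximalFam n k d G ∧ G.card = m}

/-- `m` is the `r`-th largest element of `S`. -/
def NthLargest (S : Set ℕ) (r m : ℕ) : Prop :=
  m ∈ S ∧ {x ∈ S | m < x}.ncard = r - 1

lemma sunflower_anti {D D' : Finset (Finset ℕ)} {X : Finset ℕ} (h : IsSunflower D X)
    (h' : D' ⊆ D) : IsSunflower D' X := fun A hA B hB hne => h A (h' hA) B (h' hB) hne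

lemma sunflower_kernel_subset {D : Finset (Finset ℕ)} {X : Finset ℕ} (h : IsSunflower D X)
    (h2 : 2 ≤ D.card) : ∀ A ∈ D, X ⊆ A := by
  intro A hA
  obtain ⟨B, hB, hne⟩ := Finset.exists_mem_ne (show 1 < D.card by omega) A
  rw [← h A hA B hB (Ne.symm hne)]
  exact Finset.inter_subset_left

lemma erdos_rado (s : ℕ) (hs : 1 ≤ s) :
    ∀ m (G : Finset (Finset ℕ)), (∀ A ∈ G, A.card = m) →
      (s-1)^m * m.factorial < G.card →
      ∃ Y D, D ⊆ G ∧ D.card = s ∧ IsSunflower D Y := by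
  intro m
  induction m with
  | zero =>
    intro G hG hcard
    simp only [pow_zero, Nat.factorial_zero, one_mul] at hcard
    exfalso
    have : G.card ≤ 1 := Finset.card_le_one.2 (by
      intro a ha b hb
      rw [Finset.card_eq_zero.1 (hG a ha), Finset.card_eq_zero.1 (hG b hb)])
    omega
  | succ m ih =>
    intro G hG hcard
    -- maximal pairwise disjoint subfamily
    set P : Finset (Finset (Finset ℕ)) :=
      G.powerset.filter (fun T => IsSunflower T ∅) with hP
    have hPne : P.Nonempty := ⟨∅, Finset.mem_filter.2 ⟨Finset.empty_mem_powerset _, by simp [IsSunflower]⟩⟩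
    obtain ⟨T, hTP, hTmax⟩ := P.exists_max_image Finset.card hPne
    have hTG : T ⊆ G := Finset.mem_powerset.1 (Finset.mem_filter.1 hTP).1
    have hTsun : IsSunflower T ∅ := (Finset.mem_filter.1 hTP).2
    by_cases hsT : s ≤ T.card
    · obtain ⟨D, hDT, hDcard⟩ := Finset.exists_subset_card_eq hsT
      exact ⟨∅, D, hDT.trans hTG, hDcard, sunflower_anti hTsun hDT⟩
    · push_neg at hsT
      set U : Finset ℕ := T.biUnion id with hU
      have hUcard : U.card ≤ (s-1) * (m+1) := by
        calc U.card ≤ ∑ A ∈ T, A.card := Finset.card_biUnion_le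
        _ ≤ T.card * (m+1) := by
            rw [← smul_eq_mul]
            exact Finset.sum_le_card_nsmul _ _ _ (fun A hA => (hG A (hTG hA)).le)
        _ ≤ (s-1) * (m+1) := Nat.mul_le_mul_right _ (by omega)
      have hcover : ∀ A ∈ G, ∃ x ∈ U, x ∈ A := by
        intro A hA
        by_contra hno
        push_neg at hno
        have hAU : ∀ x ∈ A, x ∉ U := fun x hx hxU => hno x hxU hx
        have hAT : A ∉ T := by
          intro hAT
          have hxA : A.Nonempty := Finset.card_pos.1 (by rw [hG A hA]; omega)
          obtain ⟨x, hx⟩ := hxA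
          exact hAU x hx (Finset.mem_biUnion.2 ⟨A, hAT, hx⟩)
        have hins : insert A T ∈ P := by
          refine Finset.mem_filter.2 ⟨Finset.mem_powerset.2 ?_, ?_⟩
          · intro B hB
            rcases Finset.mem_insert.1 hB with h | h
            · exact h ▸ hA
            · exact hTG h
          · intro B hB C hC hne
            rcases Finset.mem_insert.1 hB with hB' | hB' <;>
              rcases Finset.mem_insert.1 hC with hC' | hC'
            · exact absurd (hB'.trans hC'.symm) hne
            · subst hB'
              apply Finset.eq_empty_of_forall_notMem
              intro x hx
              exact hAU x (Finset.mem_inter.1 hx).1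
                (Finset.mem_biUnion.2 ⟨C, hC', (Finset.mem_inter.1 hx).2⟩)
            · subst hC'
              apply Finset.eq_empty_of_forall_notMem
              intro x hx
              exact hAU x (Finset.mem_inter.1 hx).2
                (Finset.mem_biUnion.2 ⟨B, hB', (Finset.mem_inter.1 hx).1⟩)
            · exact hTsun B hB' C hC' hne
        have := hTmax _ hins
        rw [Finset.card_insert_of_notMem hAT] at this
        omega
      -- pigeonhole
      have hGsub : G ⊆ U.biUnion (fun x => G.filter (fun A => x ∈ A)) := by
        intro A hA
        obtain ⟨x, hxU, hxA⟩ := hcover A hA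
        exact Finset.mem_biUnion.2 ⟨x, hxU, Finset.mem_filter.2 ⟨hA, hxA⟩⟩
      have hsum : G.card ≤ ∑ x ∈ U, (G.filter (fun A => x ∈ A)).card :=
        (Finset.card_le_card hGsub).trans Finset.card_biUnion_le
      have hex : ∃ x ∈ U, (s-1)^m * m.factorial < (G.filter (fun A => x ∈ A)).card := by
        by_contra hno
        push_neg at hno
        have : ∑ x ∈ U, (G.filter (fun A => x ∈ A)).card ≤ U.card * ((s-1)^m * m.factorial) := by
          rw [← smul_eq_mul]
          exact Finset.sum_le_card_nsmul _ _ _ (fun x hx => hno x hx)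
        have h2 : U.card * ((s-1)^m * m.factorial) ≤ ((s-1)*(m+1)) * ((s-1)^m * m.factorial) :=
          Nat.mul_le_mul_right _ hUcard
        have h3 : ((s-1)*(m+1)) * ((s-1)^m * m.factorial) = (s-1)^(m+1) * (m+1).factorial := by
          rw [Nat.factorial_succ, pow_succ]; ring
        omega
      obtain ⟨x, _, hx⟩ := hex
      set Gx := G.filter (fun A => x ∈ A) with hGx
      have hxmem : ∀ A ∈ Gx, x ∈ A := fun A hA => (Finset.mem_filter.1 hA).2
      set G' := Gx.image (fun A => A.erase x) with hG'
      have hinj : Set.InjOn (fun A => Finset.erase A x) Gx := by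
        intro A hA B hB h
        have := congrArg (insert x) h
        rwa [Finset.insert_erase (hxmem A hA), Finset.insert_erase (hxmem B hB)] at this
      have hG'card : G'.card = Gx.card := Finset.card_image_of_injOn hinj
      have hG'mem : ∀ B ∈ G', B.card = m := by
        intro B hB
        obtain ⟨A, hA, rfl⟩ := Finset.mem_image.1 hB
        rw [Finset.card_erase_of_mem (hxmem A hA),
          hG A (Finset.mem_filter.1 hA).1]
        omega
      obtain ⟨Y', D', hD'G', hD'card, hD'sun⟩ := ih G' hG'mem (by omega)
      refine ⟨insert x Y', D'.image (insert x), ?_, ?_, ?_⟩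
      · intro A hA
        obtain ⟨B, hB, rfl⟩ := Finset.mem_image.1 hA
        obtain ⟨A', hA', rfl⟩ := Finset.mem_image.1 (hD'G' hB)
        rw [Finset.insert_erase (hxmem A' hA')]
        exact (Finset.mem_filter.1 hA').1
      · rw [Finset.card_image_of_injOn, hD'card]
        intro B hB C hC h
        have hxB : x ∉ B := by
          obtain ⟨A', hA', rfl⟩ := Finset.mem_image.1 (hD'G' hB)
          exact Finset.notMem_erase x A'
        have hxC : x ∉ C := by
          obtain ⟨A', hA', rfl⟩ := Finset.mem_image.1 (hD'G' hC)
          exact Finset.notMem_erase x A'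
        have := congrArg (fun S => Finset.erase S x) h
        simpa [Finset.erase_insert hxB, Finset.erase_insert hxC] using this
      · intro A hA B hB hne
        obtain ⟨A', hA', rfl⟩ := Finset.mem_image.1 hA
        obtain ⟨B', hB', rfl⟩ := Finset.mem_image.1 hB
        have hne' : A' ≠ B' := fun h => hne (by rw [h])
        have heq : insert x A' ∩ insert x B' = insert x (A' ∩ B') := by
          ext z
          simp only [Finset.mem_inter, Finset.mem_insert]
          tauto
        rw [heq, hD'sun A' hA' B' hB' hne']


lemma small_kernel_small_sunflower (n k d : ℕ) (hd : 3 ≤ d) (hk : 2 ≤ k)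
    (F : Finset (Finset ℕ)) (hFam : FamilyOn n k F) (hInt : DWise d F)
    (hNT : NonTrivialFam F) {D : Finset (Finset ℕ)} {Y : Finset ℕ}
    (hD : D ⊆ F) (hsf : IsSunflower D Y) (hY : Y.card < d) : D.card < k := by
  by_contra hge
  push_neg at hge
  obtain ⟨F1, hF1, F2, hF2, hne12⟩ := Finset.one_lt_card.1 (show 1 < D.card by omega)
  unfold NonTrivialFam at hNT
  push_neg at hNT
  choose Afun hAmem hAnot using hNT
  rcases Finset.eq_empty_or_nonempty Y with hYe | ⟨y0, hy0⟩
  · obtain ⟨x, hx⟩ := hInt (fun j => if (j : ℕ) = 0 then F1 else F2) (by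
      intro i
      by_cases h : (i : ℕ) = 0 <;> simp [h, hD hF1, hD hF2])
    have hx1 : x ∈ F1 := by simpa using hx ⟨0, by omega⟩
    have hx2 : x ∈ F2 := by
      have := hx ⟨1, by omega⟩
      simpa using this
    have : x ∈ F1 ∩ F2 := Finset.mem_inter.2 ⟨hx1, hx2⟩
    rw [hsf F1 hF1 F2 hF2 hne12, hYe] at this
    exact absurd this (Finset.notMem_empty x)
  · set L := Y.toList with hL
    have hLlen : L.length = Y.card := Finset.length_toList Y
    have hLd : L.length ≤ d - 1 := by omega
    have hexist : ∀ P ∈ D, ∃ x, x ∈ P ∧ ∀ y ∈ Y, x ∈ Afun y := by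
      intro P hP
      obtain ⟨x, hx⟩ := hInt
        (fun j => if h : (j : ℕ) < L.length then Afun (L.get ⟨j, h⟩) else P) (by
          intro i
          by_cases h : (i : ℕ) < L.length
          · simp [h, hAmem]
          · simp [h, hD hP])
      refine ⟨x, ?_, ?_⟩
      · have := hx ⟨d - 1, by omega⟩
        rw [dif_neg (by simp; omega)] at this
        exact this
      · intro y hy
        have hyL : y ∈ L := by rw [hL, Finset.mem_toList]; exact hy
        obtain ⟨l, hl⟩ := List.mem_iff_get.1 hyL
        have hld : (l : ℕ) < d := by have := l.2; omega
        have := hx ⟨(l : ℕ), hld⟩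
        rw [dif_pos (by simpa using l.2)] at this
        have hle : L.get ⟨(l : ℕ), by simpa using l.2⟩ = y := by rw [← hl]
        rwa [hle] at this
    set g : Finset ℕ → ℕ := fun P => if hP : P ∈ D then (hexist P hP).choose else 0 with hg
    have hgP : ∀ P ∈ D, g P ∈ P ∧ ∀ y ∈ Y, g P ∈ Afun y := by
      intro P hP
      rw [hg]
      simp only [dif_pos hP]
      exact (hexist P hP).choose_spec
    have hgY : ∀ P ∈ D, g P ∉ Y := by
      intro P hP hgY
      exact hAnot (g P) ((hgP P hP).2 _ hgY)
    have hcle : D.card ≤ (Afun y0 \ Y).card := by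
      apply Finset.card_le_card_of_injOn g
      · intro P hP
        exact Finset.mem_sdiff.2 ⟨(hgP P hP).2 y0 hy0, hgY P hP⟩
      · intro P hP Q hQ hPQ
        by_contra hne
        have : g P ∈ P ∩ Q := Finset.mem_inter.2 ⟨(hgP P hP).1, hPQ ▸ (hgP Q hQ).1⟩
        rw [hsf P hP Q hQ hne] at this
        exact hgY P hP this
    have hinter : (Afun y0 ∩ Y).Nonempty := by
      obtain ⟨z, hz⟩ := hInt
        (fun j => if (j : ℕ) = 0 then Afun y0 else if (j : ℕ) = 1 then F1 else F2) (by
          intro i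
          by_cases h : (i : ℕ) = 0
          · simp [h, hAmem]
          · by_cases h1 : (i : ℕ) = 1 <;> simp [h, h1, hD hF1, hD hF2, hAmem])
      have hz0 : z ∈ Afun y0 := by simpa using hz ⟨0, by omega⟩
      have hz1 : z ∈ F1 := by
        have := hz ⟨1, by omega⟩
        simpa using this
      have hz2 : z ∈ F2 := by
        have := hz ⟨2, by omega⟩
        simpa using this
      refine ⟨z, Finset.mem_inter.2 ⟨hz0, ?_⟩⟩
      rw [← hsf F1 hF1 F2 hF2 hne12]
      exact Finset.mem_inter.2 ⟨hz1, hz2⟩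
    have hcard : (Afun y0 \ Y).card + (Afun y0 ∩ Y).card = k := by
      rw [Finset.card_sdiff_add_card_inter, (hFam _ (hAmem y0)).2]
    have := Finset.card_pos.2 hinter
    omega


lemma greedy (k i N : ℕ) (F : Finset (Finset ℕ)) (hFk : ∀ A ∈ F, A.card = k)
    (Y : Finset ℕ) (S : Finset (Finset ℕ))
    (hSsun : IsSunflower S Y) (hSY : ∀ X ∈ S, Y ⊆ X) (hSi : ∀ X ∈ S, X.card = i)
    (hik : i ≤ k) (hk1 : 1 ≤ k)
    (hDX : ∀ X ∈ S, ∃ D, D ⊆ F ∧ D.card = N ∧ IsSunflower D X ∧ ∀ P ∈ D, X ⊆ P)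
    (hN : S.card * k ≤ N) :
    ∃ D, D ⊆ F ∧ D.card = S.card ∧ IsSunflower D Y := by
  have key : ∀ S'' : Finset (Finset ℕ), S'' ⊆ S →
      ∃ E : Finset (Finset ℕ × Finset ℕ),
        (∀ q ∈ E, q.1 ∈ S'' ∧ q.2 ∈ F ∧ q.1 ⊆ q.2 ∧ ∀ X' ∈ S, (q.2 \ q.1) ∩ X' = ∅) ∧
        (∀ q ∈ E, ∀ q' ∈ E, q ≠ q' → (q.2 \ q.1) ∩ (q'.2 \ q'.1) = ∅) ∧
        E.image Prod.fst = S'' ∧ E.card = S''.card := by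
    intro S''
    induction S'' using Finset.induction_on with
    | empty => intro _; exact ⟨∅, by simp, by simp, by simp, by simp⟩
    | @insert X S'' hXS'' ih =>
      intro hsub
      have hXS : X ∈ S := hsub (Finset.mem_insert_self X S'')
      have hS''S : S'' ⊆ S := fun a ha => hsub (Finset.mem_insert_of_mem ha)
      obtain ⟨E, hE1, hE2, hE3, hE4⟩ := ih hS''S
      obtain ⟨DX, hDXF, hDXcard, hDXsun, hDXsub⟩ := hDX X hXS
      set W : Finset ℕ := (S.biUnion (fun X' => X' \ X)) ∪
        (E.biUnion (fun q => q.2 \ q.1)) with hW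
      have hS1 : 1 ≤ S.card := Finset.card_pos.2 ⟨X, hXS⟩
      have hWcard : W.card < N := by
        have h1 : (S.biUnion (fun X' => X' \ X)).card ≤ (S.card - 1) * i := by
          calc (S.biUnion (fun X' => X' \ X)).card ≤ ∑ X' ∈ S, (X' \ X).card :=
              Finset.card_biUnion_le
          _ = ∑ X' ∈ S.erase X, (X' \ X).card + (X \ X).card := (Finset.sum_erase_add S _ hXS).symm
          _ = ∑ X' ∈ S.erase X, (X' \ X).card := by simp
          _ ≤ (S.erase X).card * i := by
              rw [← smul_eq_mul]
              exact Finset.sum_le_card_nsmul _ _ _ (fun X' hX' => by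
                calc (X' \ X).card ≤ X'.card := Finset.card_le_card Finset.sdiff_subset
                _ = i := hSi X' (Finset.mem_of_mem_erase hX'))
          _ = (S.card - 1) * i := by rw [Finset.card_erase_of_mem hXS]
        have h2 : (E.biUnion (fun q => q.2 \ q.1)).card ≤ (S.card - 1) * (k - i) := by
          calc (E.biUnion (fun q => q.2 \ q.1)).card ≤ ∑ q ∈ E, (q.2 \ q.1).card :=
              Finset.card_biUnion_le
          _ ≤ E.card * (k - i) := by
              rw [← smul_eq_mul]
              refine Finset.sum_le_card_nsmul _ _ _ (fun q hq => ?_)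
              obtain ⟨hq1, hq2, hq3, _⟩ := hE1 q hq
              rw [Finset.card_sdiff_of_subset hq3, hFk _ hq2, hSi _ (hS''S hq1)]
          _ ≤ (S.card - 1) * (k - i) := by
              apply Nat.mul_le_mul_right
              have : S'' ⊆ S.erase X := fun a ha =>
                Finset.mem_erase.2 ⟨fun h => hXS'' (h ▸ ha), hS''S ha⟩
              have := Finset.card_le_card this
              rw [Finset.card_erase_of_mem hXS] at this
              omega
        have h3 : (S.card - 1) * i + (S.card - 1) * (k - i) = (S.card - 1) * k := by
          rw [← Nat.mul_add]
          congr 1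
          omega
        have h4 : (S.card - 1) * k < S.card * k :=
          (Nat.mul_lt_mul_right (show 0 < k by omega)).2 (by omega)
        calc W.card ≤ _ + _ := Finset.card_union_le _ _
        _ ≤ (S.card - 1) * i + (S.card - 1) * (k - i) := Nat.add_le_add h1 h2
        _ < N := by omega
      -- choose a good petal
      have hgood : ∃ P ∈ DX, (P \ X) ∩ W = ∅ := by
        by_contra hno
        push_neg at hno
        have hne : ∀ P ∈ DX, ((P \ X) ∩ W).Nonempty := fun P hP =>
          hno P hP
        set c : Finset ℕ → ℕ := fun P => if hP : P ∈ DX then (hne P hP).choose else 0 with hc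
        have hcmem : ∀ P ∈ DX, c P ∈ (P \ X) ∩ W := by
          intro P hP
          rw [hc]; simp only [dif_pos hP]
          exact (hne P hP).choose_spec
        have : DX.card ≤ W.card := by
          apply Finset.card_le_card_of_injOn c
          · intro P hP
            exact (Finset.mem_inter.1 (hcmem P hP)).2
          · intro P hP Q hQ hPQ
            by_contra hnePQ
            have h1 := (Finset.mem_inter.1 (hcmem P hP)).1
            have h2 := (Finset.mem_inter.1 (hcmem Q hQ)).1
            rw [hPQ] at h1
            have : c Q ∈ (P ∩ Q) \ X := by
              rw [Finset.mem_sdiff] at h1 h2 ⊢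
              exact ⟨Finset.mem_inter.2 ⟨h1.1, h2.1⟩, h1.2⟩
            rw [hDXsun P hP Q hQ hnePQ] at this
            simp at this
        omega
      obtain ⟨P, hPDX, hPW⟩ := hgood
      have hPdis : ∀ z, z ∈ P \ X → z ∉ W := by
        intro z hz hzW
        have : z ∈ (P \ X) ∩ W := Finset.mem_inter.2 ⟨hz, hzW⟩
        rw [hPW] at this
        simp at this
      refine ⟨insert (X, P) E, ?_, ?_, ?_, ?_⟩
      · intro q hq
        rcases Finset.mem_insert.1 hq with rfl | hq'
        · refine ⟨Finset.mem_insert_self _ _, hDXF hPDX, hDXsub P hPDX, ?_⟩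
          intro X' hX'
          apply Finset.eq_empty_of_forall_notMem
          intro z hz
          obtain ⟨hz1, hz2⟩ := Finset.mem_inter.1 hz
          have hzX : z ∉ X := (Finset.mem_sdiff.1 hz1).2
          exact hPdis z hz1 (Finset.mem_union_left _
            (Finset.mem_biUnion.2 ⟨X', hX', Finset.mem_sdiff.2 ⟨hz2, hzX⟩⟩))
        · obtain ⟨a, b, c', dd⟩ := hE1 q hq'
          exact ⟨Finset.mem_insert_of_mem a, b, c', dd⟩
      · intro q hq q' hq' hne
        rcases Finset.mem_insert.1 hq with rfl | hq1 <;>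
          rcases Finset.mem_insert.1 hq' with h | hq2
        · exact absurd h.symm hne
        · apply Finset.eq_empty_of_forall_notMem
          intro z hz
          obtain ⟨hz1, hz2⟩ := Finset.mem_inter.1 hz
          exact hPdis z hz1 (Finset.mem_union_right _ (Finset.mem_biUnion.2 ⟨q', hq2, hz2⟩))
        · subst h
          apply Finset.eq_empty_of_forall_notMem
          intro z hz
          obtain ⟨hz1, hz2⟩ := Finset.mem_inter.1 hz
          exact hPdis z hz2 (Finset.mem_union_right _ (Finset.mem_biUnion.2 ⟨q, hq1, hz1⟩))
        · exact hE2 q hq1 q' hq2 hne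
      · rw [Finset.image_insert, hE3]
      · rw [Finset.card_insert_of_notMem (fun h => hXS'' ((hE1 _ h).1)), hE4,
          Finset.card_insert_of_notMem hXS'']
  obtain ⟨E, hE1, hE2, hE3, hE4⟩ := key S Finset.Subset.rfl
  have hfstinj : Set.InjOn Prod.fst (E : Set (Finset ℕ × Finset ℕ)) := by
    apply Finset.injOn_of_card_image_eq
    rw [hE3, hE4]
  have hfst : ∀ {q q' : Finset ℕ × Finset ℕ}, q ∈ E → q' ∈ E → q.1 = q'.1 → q = q' :=
    fun hq hq' h => hfstinj (Finset.mem_coe.2 hq) (Finset.mem_coe.2 hq') h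
  have hsndinj : Set.InjOn Prod.snd (E : Set (Finset ℕ × Finset ℕ)) := by
    intro q hq q' hq' hqq
    rw [Finset.mem_coe] at hq hq'
    by_contra hne
    have hne1 : q.1 ≠ q'.1 := fun h => hne (hfst hq hq' h)
    obtain ⟨hq1S, hq2F, hq12, hqinv⟩ := hE1 q hq
    obtain ⟨hq1S', hq2F', hq12', hqinv'⟩ := hE1 q' hq'
    have hnonempty : (q'.1 \ q.1).Nonempty := by
      rw [Finset.sdiff_nonempty]
      intro hsubQ
      refine hne1 ((Finset.eq_of_subset_of_card_le hsubQ ?_).symm)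
      rw [hSi _ hq1S, hSi _ hq1S']
    obtain ⟨z, hz⟩ := hnonempty
    have hzmem := Finset.mem_sdiff.1 hz
    have hzP : z ∈ q.2 \ q.1 :=
      Finset.mem_sdiff.2 ⟨by rw [hqq]; exact hq12' hzmem.1, hzmem.2⟩
    have : z ∈ (q.2 \ q.1) ∩ q'.1 := Finset.mem_inter.2 ⟨hzP, hzmem.1⟩
    rw [hqinv q'.1 hq1S'] at this
    simp at this
  refine ⟨E.image Prod.snd, ?_, ?_, ?_⟩
  · intro A hA
    obtain ⟨q, hq, rfl⟩ := Finset.mem_image.1 hA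
    exact (hE1 q hq).2.1
  · rw [Finset.card_image_of_injOn hsndinj, hE4]
  · intro A hA B hB hAB
    obtain ⟨q, hq, rfl⟩ := Finset.mem_image.1 hA
    obtain ⟨q', hq', rfl⟩ := Finset.mem_image.1 hB
    have hneq : q ≠ q' := fun h => hAB (by rw [h])
    have hne1 : q.1 ≠ q'.1 := fun h => hneq (hfst hq hq' h)
    obtain ⟨hq1S, hq2F, hq12, hqinv⟩ := hE1 q hq
    obtain ⟨hq1S', hq2F', hq12', hqinv'⟩ := hE1 q' hq'
    apply Finset.Subset.antisymm
    · intro z hz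
      obtain ⟨hz1, hz2⟩ := Finset.mem_inter.1 hz
      by_cases h1 : z ∈ q.1 <;> by_cases h2 : z ∈ q'.1
      · rw [← hSsun q.1 hq1S q'.1 hq1S' hne1]
        exact Finset.mem_inter.2 ⟨h1, h2⟩
      · exfalso
        have : z ∈ (q'.2 \ q'.1) ∩ q.1 :=
          Finset.mem_inter.2 ⟨Finset.mem_sdiff.2 ⟨hz2, h2⟩, h1⟩
        rw [hqinv' q.1 hq1S] at this
        simp at this
      · exfalso
        have : z ∈ (q.2 \ q.1) ∩ q'.1 :=
          Finset.mem_inter.2 ⟨Finset.mem_sdiff.2 ⟨hz1, h1⟩, h2⟩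
        rw [hqinv q'.1 hq1S'] at this
        simp at this
      · exfalso
        have : z ∈ (q.2 \ q.1) ∩ (q'.2 \ q'.1) :=
          Finset.mem_inter.2 ⟨Finset.mem_sdiff.2 ⟨hz1, h1⟩, Finset.mem_sdiff.2 ⟨hz2, h2⟩⟩
        rw [hE2 q hq q' hq' hneq] at this
        simp at this
    · intro z hz
      exact Finset.mem_inter.2 ⟨hq12 (hSY q.1 hq1S hz), hq12' (hSY q'.1 hq1S' hz)⟩


lemma choose_sub_le (a b : ℕ) : ∀ j, j ≤ b → b ≤ a → (a-j).choose (b-j) ≤ a.choose b := by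
  intro j
  induction j with
  | zero => simp
  | succ j ih =>
    intro hj hba
    have h1 : (a - (j+1)).choose (b - (j+1)) ≤ (a-j).choose (b-j) := by
      have hx : a - j = (a - (j+1)) + 1 := by omega
      have hy : b - j = (b - (j+1)) + 1 := by omega
      rw [hx, hy, Nat.choose_succ_succ]
      omega
    exact h1.trans (ih (by omega) hba)

lemma filter_superset_card_le (n k : ℕ) (F : Finset (Finset ℕ)) (hFam : FamilyOn n k F)
    (T : Finset ℕ) (hT : T ⊆ Finset.Icc 1 n) :
    (F.filter (fun A => T ⊆ A)).card ≤ (n - T.card).choose (k - T.card) := by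
  have h1 : (F.filter (fun A => T ⊆ A)).card ≤
      (((Finset.Icc 1 n) \ T).powersetCard (k - T.card)).card := by
    apply Finset.card_le_card_of_injOn (fun A => A \ T)
    · intro A hA
      obtain ⟨hAF, hTA⟩ := Finset.mem_filter.1 hA
      obtain ⟨hsub, hcard⟩ := hFam A hAF
      refine Finset.mem_powersetCard.2 ⟨Finset.sdiff_subset_sdiff hsub le_rfl, ?_⟩
      rw [Finset.card_sdiff_of_subset hTA, hcard]
    · intro A hA B hB hAB
      rw [Finset.mem_coe, Finset.mem_filter] at hA hB
      have := congrArg (fun S => S ∪ T) hAB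
      simpa [Finset.sdiff_union_of_subset hA.2, Finset.sdiff_union_of_subset hB.2] using this
  rw [Finset.card_powersetCard, Finset.card_sdiff_of_subset hT, Nat.card_Icc] at h1
  simpa using h1

lemma exists_min_Btwo (n k d : ℕ) (F : Finset (Finset ℕ)) {Y : Finset ℕ}
    (hY : Y ∈ Bone n k d F) : ∃ Z ∈ Btwo n k d F, Z ⊆ Y := by
  obtain ⟨Z, hZ, hmin⟩ : ∃ Z ∈ (Bone n k d F).filter (fun W => W ⊆ Y),
      ∀ W ∈ (Bone n k d F).filter (fun W => W ⊆ Y), ¬ W < Z := by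
    obtain ⟨Z, hZm⟩ := Finset.exists_minimal (s := (Bone n k d F).filter (fun W => W ⊆ Y))
      ⟨Y, Finset.mem_filter.2 ⟨hY, Finset.Subset.rfl⟩⟩
    exact ⟨Z, hZm.1, fun W hW hlt => hlt.not_ge (hZm.2 hW hlt.le)⟩
  rw [Finset.mem_filter] at hZ
  refine ⟨Z, Finset.mem_filter.2 ⟨hZ.1, ?_⟩, hZ.2⟩
  intro W hW hWZ
  by_contra hne
  exact hmin W (Finset.mem_filter.2 ⟨hW, hWZ.trans hZ.2⟩)
    (Finset.lt_iff_ssubset.2 (Finset.ssubset_iff_subset_ne.2 ⟨hWZ, hne⟩))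

lemma mem_Bone_elim (n k d : ℕ) (F : Finset (Finset ℕ)) {X : Finset ℕ}
    (hX : X ∈ Bone n k d F) :
    X ⊆ Finset.Icc 1 n ∧ d ≤ X.card ∧ X.card < k ∧
      ∃ D, D ⊆ F ∧ D.card = k ^ (X.card - d + 1) ∧ IsSunflower D X := by
  obtain ⟨hpow, h1, h2, D, hD, hcard, hsun⟩ := Finset.mem_filter.1 hX
  exact ⟨Finset.mem_powerset.1 hpow, h1, h2, D, Finset.mem_powerset.1 hD, hcard, hsun⟩

lemma mem_Bone_intro (n k d : ℕ) (F : Finset (Finset ℕ)) {X : Finset ℕ}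
    (h1 : X ⊆ Finset.Icc 1 n) (h2 : d ≤ X.card) (h3 : X.card < k)
    (D : Finset (Finset ℕ)) (hD : D ⊆ F) (hcard : D.card = k ^ (X.card - d + 1))
    (hsun : IsSunflower D X) : X ∈ Bone n k d F :=
  Finset.mem_filter.2 ⟨Finset.mem_powerset.2 h1, h2, h3,
    D, Finset.mem_powerset.2 hD, hcard, hsun⟩

lemma famB_cover (n k d : ℕ) (F : Finset (Finset ℕ)) :
    ∀ A ∈ F, ∃ T ∈ famB n k d F, T ⊆ A := by
  intro A hA
  by_cases h : A ∈ Bthree n k d F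
  · exact ⟨A, Finset.mem_union_right _ h, Finset.Subset.rfl⟩
  · have : ¬ ∀ X ∈ Btwo n k d F, ¬ X ⊆ A := fun hall =>
      h (Finset.mem_filter.2 ⟨hA, hall⟩)
    push_neg at this
    obtain ⟨X, hX, hXA⟩ := this
    exact ⟨X, Finset.mem_union_left _ hX, hXA⟩

lemma famB_facts (n k d : ℕ) (F : Finset (Finset ℕ)) (hFam : FamilyOn n k F) (hdk : d ≤ k) :
    ∀ T ∈ famB n k d F, T ⊆ Finset.Icc 1 n ∧ d ≤ T.card ∧ T.card ≤ k := by
  intro T hT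
  rcases Finset.mem_union.1 hT with h | h
  · obtain ⟨h1, h2, h3, _⟩ := mem_Bone_elim n k d F (Finset.mem_filter.1 h).1
    exact ⟨h1, h2, by omega⟩
  · obtain ⟨h1, h2⟩ := hFam T (Finset.mem_filter.1 h).1
    exact ⟨h1, by omega, by omega⟩

lemma BI_k_bound (n k d : ℕ) (hd : 3 ≤ d) (hk : d + 1 ≤ k) (F : Finset (Finset ℕ))
    (hFam : FamilyOn n k F) (hInt : DWise d F) (hNT : NonTrivialFam F) :
    (BI n k d k F).card ≤ (k^(k-d)-1)^k * k.factorial := by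
  by_contra hcon
  push_neg at hcon
  set s := k^(k-d) with hs
  have hks : k ≤ s := Nat.le_self_pow (by omega) k
  have hBIF : ∀ T ∈ BI n k d k F, T ∈ F := by
    intro T hT
    obtain ⟨hT1, hT2⟩ := Finset.mem_filter.1 hT
    rcases Finset.mem_union.1 hT1 with h | h
    · obtain ⟨_, _, h3, _⟩ := mem_Bone_elim n k d F (Finset.mem_filter.1 h).1
      omega
    · exact (Finset.mem_filter.1 h).1
  obtain ⟨Y, D, hDBI, hDcard, hDsun⟩ := erdos_rado s (by omega) k (BI n k d k F)
    (fun T hT => (Finset.mem_filter.1 hT).2) hcon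
  have hDF : D ⊆ F := fun T hT => hBIF T (hDBI hT)
  obtain ⟨A, hA, B, hB, hAB⟩ := Finset.one_lt_card.1 (show 1 < D.card by omega)
  have hYsub : Y ⊆ A := sunflower_kernel_subset hDsun (by omega) A hA
  have hcardA : A.card = k := (hFam A (hDF hA)).2
  have hYlt : Y.card < k := by
    rcases (Finset.card_le_card hYsub).lt_or_eq with h | h
    · omega
    · exfalso
      have hYA : Y = A := Finset.eq_of_subset_of_card_le hYsub (by omega)
      have : A ∩ B = Y := hDsun A hA B hB hAB
      have h2 : A = A ∩ B := by rw [this, hYA]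
      have hABsub : A ⊆ B := by
        intro x hx
        rw [h2] at hx
        exact (Finset.mem_inter.1 hx).2
      exact hAB (Finset.eq_of_subset_of_card_le hABsub
        (by rw [hcardA, (hFam B (hDF hB)).2]))
  have hYd : d ≤ Y.card := by
    by_contra hYsmall
    have := small_kernel_small_sunflower n k d hd (by omega) F hFam hInt hNT hDF hDsun
      (by omega)
    omega
  have hYBone : Y ∈ Bone n k d F := by
    obtain ⟨D', hD'D, hD'card⟩ := Finset.exists_subset_card_eq
      (show k ^ (Y.card - d + 1) ≤ D.card by
        rw [hDcard, hs]
        exact Nat.pow_le_pow_right (by omega) (by omega))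
    exact mem_Bone_intro n k d F (hYsub.trans (hFam A (hDF hA)).1) hYd hYlt
      D' (hD'D.trans hDF) hD'card (sunflower_anti hDsun hD'D)
  obtain ⟨Z, hZ, hZY⟩ := exists_min_Btwo n k d F hYBone
  have hABthree : A ∈ Bthree n k d F := by
    have hT1 := (Finset.mem_filter.1 (hDBI hA)).1
    rcases Finset.mem_union.1 hT1 with h | h
    · obtain ⟨_, _, h3, _⟩ := mem_Bone_elim n k d F (Finset.mem_filter.1 h).1
      omega
    · exact h
  exact (Finset.mem_filter.1 hABthree).2 Z hZ (hZY.trans hYsub)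

lemma BI_i_bound (n k d i : ℕ) (hd : 3 ≤ d) (hk : d + 1 ≤ k) (hi1 : d + 1 ≤ i)
    (hi2 : i ≤ k - 1) (F : Finset (Finset ℕ))
    (hFam : FamilyOn n k F) (hInt : DWise d F) (hNT : NonTrivialFam F) :
    (BI n k d i F).card ≤ (k^(k-d)-1)^k * k.factorial := by
  by_contra hcon
  push_neg at hcon
  set s := k^(k-d) with hs
  have hks : k ≤ s := Nat.le_self_pow (by omega) k
  have hB2 : ∀ T ∈ BI n k d i F, T ∈ Btwo n k d F := by
    intro T hT
    obtain ⟨hT1, hT2⟩ := Finset.mem_filter.1 hT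
    rcases Finset.mem_union.1 hT1 with h | h
    · exact h
    · have := (hFam T (Finset.mem_filter.1 h).1).2
      omega
  obtain ⟨Y, SS, hSSBI, hSScard, hSSsun⟩ := erdos_rado s (by omega) i (BI n k d i F)
    (fun T hT => (Finset.mem_filter.1 hT).2)
    (lt_of_le_of_lt (Nat.mul_le_mul (Nat.pow_le_pow_right (by omega) (by omega))
      (Nat.factorial_le (by omega))) hcon)
  have hYsub : ∀ X ∈ SS, Y ⊆ X := sunflower_kernel_subset hSSsun (by omega)
  have hSSi : ∀ X ∈ SS, X.card = i := fun X hX =>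
    (Finset.mem_filter.1 (hSSBI hX)).2
  obtain ⟨X1, hX1, X2, hX2, hX12⟩ := Finset.one_lt_card.1 (show 1 < SS.card by omega)
  have hYlt : Y.card < i := by
    rcases (Finset.card_le_card (hYsub X1 hX1)).lt_or_eq with h | h
    · rw [hSSi X1 hX1] at h; omega
    · exfalso
      have hYX : Y = X1 := Finset.eq_of_subset_of_card_le (hYsub X1 hX1) (by omega)
      have : X1 ∩ X2 = Y := hSSsun X1 hX1 X2 hX2 hX12
      have h2 : X1 = X1 ∩ X2 := by rw [this, hYX]
      have hsub12 : X1 ⊆ X2 := by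
        intro x hx
        rw [h2] at hx
        exact (Finset.mem_inter.1 hx).2
      exact hX12 (Finset.eq_of_subset_of_card_le hsub12
        (by rw [hSSi X1 hX1, hSSi X2 hX2]))
  have hDX : ∀ X ∈ SS, ∃ D, D ⊆ F ∧ D.card = k^(i-d+1) ∧ IsSunflower D X ∧ ∀ P ∈ D, X ⊆ P := by
    intro X hX
    obtain ⟨_, _, _, D, hDF, hDcard, hDsun⟩ :=
      mem_Bone_elim n k d F (Finset.mem_filter.1 (hB2 X (hSSBI hX))).1
    rw [hSSi X hX] at hDcard
    refine ⟨D, hDF, hDcard, hDsun, sunflower_kernel_subset hDsun ?_⟩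
    rw [hDcard]
    calc 2 ≤ k := by omega
    _ = k ^ 1 := (pow_one k).symm
    _ ≤ k^(i-d+1) := Nat.pow_le_pow_right (by omega) (by omega)
  have hFk : ∀ A ∈ F, A.card = k := fun A hA => (hFam A hA).2
  -- step 1: build a k-sunflower in F with kernel Y to show d ≤ Y.card
  have hYd : d ≤ Y.card := by
    by_contra hYsmall
    obtain ⟨S1, hS1SS, hS1card⟩ := Finset.exists_subset_card_eq (show k ≤ SS.card by omega)
    obtain ⟨D1, hD1F, hD1card, hD1sun⟩ := greedy k i (k^(i-d+1)) F hFk Y S1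
      (sunflower_anti hSSsun hS1SS) (fun X hX => hYsub X (hS1SS hX))
      (fun X hX => hSSi X (hS1SS hX)) (by omega) (by omega)
      (fun X hX => hDX X (hS1SS hX))
      (by rw [hS1card]
          calc k * k = k ^ 2 := (sq k).symm
          _ ≤ k^(i-d+1) := Nat.pow_le_pow_right (by omega) (by omega))
    have := small_kernel_small_sunflower n k d hd (by omega) F hFam hInt hNT hD1F hD1sun
      (by omega)
    omega
  -- step 2: build a k^(Y.card-d+1)-sunflower in F with kernel Y
  obtain ⟨S2, hS2SS, hS2card⟩ := Finset.exists_subset_card_eq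
    (show k ^ (Y.card - d + 1) ≤ SS.card by
      rw [hSScard, hs]; exact Nat.pow_le_pow_right (by omega) (by omega))
  obtain ⟨D2, hD2F, hD2card, hD2sun⟩ := greedy k i (k^(i-d+1)) F hFk Y S2
    (sunflower_anti hSSsun hS2SS) (fun X hX => hYsub X (hS2SS hX))
    (fun X hX => hSSi X (hS2SS hX)) (by omega) (by omega)
    (fun X hX => hDX X (hS2SS hX))
    (by rw [hS2card, ← pow_succ]
        exact Nat.pow_le_pow_right (by omega) (by omega))
  rw [hS2card] at hD2card
  have hYBone : Y ∈ Bone n k d F := by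
    have hX1Bone := (Finset.mem_filter.1 (hB2 X1 (hSSBI hX1))).1
    obtain ⟨hIcc, _, _, _⟩ := mem_Bone_elim n k d F hX1Bone
    exact mem_Bone_intro n k d F ((hYsub X1 hX1).trans hIcc) hYd (by omega)
      D2 hD2F hD2card hD2sun
  have hmin := (Finset.mem_filter.1 (hB2 X1 (hSSBI hX1))).2 Y hYBone (hYsub X1 hX1)
  rw [hmin] at hYlt
  rw [hSSi X1 hX1] at hYlt
  omega


theorem stmt16 (n k d : ℕ) (hd : 3 ≤ d) (hk : d + 1 ≤ k) (hn : nOne k d < n)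
    (F : Finset (Finset ℕ)) (hFam : FamilyOn n k F) (hInt : DWise d F)
    (hNT : NonTrivialFam F)
    (hCard : ((k : ℚ) - d - 1/2) * ((n - d).choose (k - d)) < (F.card : ℚ)) :
    k - d ≤ (BI n k d d F).card := by
  by_contra hcon
  push_neg at hcon
  set M := (k^(k-d)-1)^k * k.factorial with hM
  have hks : k ≤ k^(k-d) := Nat.le_self_pow (by omega) k
  have hMpos : 0 < M := Nat.mul_pos (Nat.pow_pos (by omega)) (Nat.factorial_pos k)
  -- n is large
  have hnOne : d + 2 * (k - d)^2 * M < n := by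
    have : 2 * (k - d)^2 * (k^(k-d) - 1)^k * Nat.factorial k = 2 * (k-d)^2 * M := by
      rw [hM]; ring
    unfold nOne at hn
    omega
  have hnk : k < n := by
    have h1 : k ≤ k.factorial := Nat.self_le_factorial k
    have h2 : k.factorial ≤ 2 * (k - d)^2 * M := by
      have hp : 0 < 2 * (k - d)^2 * (k^(k-d)-1)^k := by
        apply Nat.mul_pos
        · apply Nat.mul_pos (by omega)
          exact Nat.pow_pos (by omega)
        · exact Nat.pow_pos (by omega)
      calc k.factorial ≤ (2 * (k - d)^2 * (k^(k-d)-1)^k) * k.factorial :=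
          Nat.le_mul_of_pos_left _ hp
      _ = 2 * (k - d)^2 * M := by rw [hM]; ring
    omega
  -- counting in ℕ
  have hFacts := famB_facts n k d F hFam (by omega)
  have hsubB : F ⊆ (famB n k d F).biUnion (fun T => F.filter (fun A => T ⊆ A)) := by
    intro A hA
    obtain ⟨T, hT, hTA⟩ := famB_cover n k d F A hA
    exact Finset.mem_biUnion.2 ⟨T, hT, Finset.mem_filter.2 ⟨hA, hTA⟩⟩
  have hcover : F.card ≤ ∑ T ∈ famB n k d F, (n - T.card).choose (k - T.card) := by
    calc F.card ≤ ((famB n k d F).biUnion (fun T => F.filter (fun A => T ⊆ A))).card :=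
        Finset.card_le_card hsubB
    _ ≤ ∑ T ∈ famB n k d F, (F.filter (fun A => T ⊆ A)).card := Finset.card_biUnion_le
    _ ≤ ∑ T ∈ famB n k d F, (n - T.card).choose (k - T.card) :=
        Finset.sum_le_sum (fun T hT =>
          filter_superset_card_le n k F hFam T (hFacts T hT).1)
  have hfiber : ∑ T ∈ famB n k d F, (n - T.card).choose (k - T.card)
      = ∑ i ∈ Finset.Icc d k, (BI n k d i F).card * (n-i).choose (k-i) := by
    rw [← Finset.sum_fiberwise_of_maps_to
      (fun T hT => Finset.mem_Icc.2 ⟨(hFacts T hT).2.1, (hFacts T hT).2.2⟩)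
      (fun T => (n - T.card).choose (k - T.card))]
    apply Finset.sum_congr rfl
    intro i _
    rw [Finset.sum_congr rfl (fun T hT => by rw [(Finset.mem_filter.1 hT).2]),
      Finset.sum_const, smul_eq_mul]
    rfl
  have hIcc : Finset.Icc d k = insert d (Finset.Icc (d+1) k) := by
    ext x
    simp only [Finset.mem_Icc, Finset.mem_insert]
    omega
  have hdnotin : d ∉ Finset.Icc (d+1) k := by simp
  have hrest : ∑ i ∈ Finset.Icc (d+1) k, (BI n k d i F).card * (n-i).choose (k-i)
      ≤ (k-d) * (M * ((n-d-1).choose (k-d-1))) := by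
    have hcardIcc : (Finset.Icc (d+1) k).card = k - d := by
      rw [Nat.card_Icc]; omega
    have hb := Finset.sum_le_card_nsmul (Finset.Icc (d+1) k)
      (fun i => (BI n k d i F).card * (n-i).choose (k-i))
      (M * ((n-d-1).choose (k-d-1))) ?_
    · rwa [hcardIcc, smul_eq_mul] at hb
    intro i hi
    obtain ⟨hi1, hi2⟩ := Finset.mem_Icc.1 hi
    have hBi : (BI n k d i F).card ≤ M := by
      rcases eq_or_lt_of_le hi2 with h | h
      · rw [h, hM]
        exact BI_k_bound n k d hd hk F hFam hInt hNT
      · rw [hM]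
        exact BI_i_bound n k d i hd hk hi1 (by omega) F hFam hInt hNT
    have hci : (n-i).choose (k-i) ≤ (n-d-1).choose (k-d-1) := by
      have e1 : n - i = (n-d-1) - (i-(d+1)) := by omega
      have e2 : k - i = (k-d-1) - (i-(d+1)) := by omega
      rw [e1, e2]
      exact choose_sub_le _ _ _ (by omega) (by omega)
    exact Nat.mul_le_mul hBi hci
  have hstep : F.card ≤ ∑ i ∈ Finset.Icc d k, (BI n k d i F).card * (n-i).choose (k-i) := by
    rw [← hfiber]; exact hcover
  have hsplitsum : ∑ i ∈ Finset.Icc d k, (BI n k d i F).card * (n-i).choose (k-i)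
      = (BI n k d d F).card * (n-d).choose (k-d)
        + ∑ i ∈ Finset.Icc (d+1) k, (BI n k d i F).card * (n-i).choose (k-i) := by
    rw [hIcc, Finset.sum_insert hdnotin]
  have h1 : (BI n k d d F).card * (n-d).choose (k-d) ≤ (k-d-1) * ((n-d).choose (k-d)) :=
    Nat.mul_le_mul_right _ (by omega)
  have total : F.card ≤ (k-d-1) * ((n-d).choose (k-d)) + (k-d) * (M * ((n-d-1).choose (k-d-1))) := by
    omega
  -- switch to ℚ
  obtain ⟨a, ha⟩ : ∃ a, k = d + 1 + a := ⟨k-d-1, by omega⟩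
  obtain ⟨m, hm⟩ : ∃ m, n = d + 1 + m := ⟨n-d-1, by omega⟩
  have ekd : k - d = a + 1 := by omega
  have ekd1 : k - d - 1 = a := by omega
  have end1 : n - d = m + 1 := by omega
  have end2 : n - d - 1 = m := by omega
  rw [ekd1, ekd, end2, end1] at total
  have hid : (m+1) * (m.choose ((a+1)-1)) = ((m+1).choose (a+1)) * (a+1) := by
    have := Nat.add_one_mul_choose_eq m a
    simpa using this
  simp only [Nat.add_sub_cancel] at hid
  have hmM : 2 * (a+1)^2 * M ≤ m := by
    rw [ekd] at hnOne
    omega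
  have hchoosepos : 0 < (m+1).choose (a+1) := Nat.choose_pos (by omega)
  -- cast
  have f1 : ((a:ℚ) + 1/2) * ((m+1).choose (a+1)) < (F.card : ℚ) := by
    have e1 : n - d = m + 1 := end1
    have e2 : k - d = a + 1 := ekd
    rw [e1, e2] at hCard
    have hkq : (k:ℚ) = (d:ℚ) + 1 + a := by rw [ha]; push_cast; ring
    rw [hkq] at hCard
    convert hCard using 2
    ring
  have f2 : (F.card : ℚ) ≤ (a:ℚ) * ((m+1).choose (a+1))
      + ((a:ℚ)+1) * ((M:ℚ) * (m.choose a)) := by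
    have := (Nat.cast_le (α := ℚ)).2 total
    push_cast at this
    convert this using 2 <;> push_cast <;> ring
  have f3 : ((m:ℚ)+1) * (m.choose a) = ((m+1).choose (a+1) : ℚ) * ((a:ℚ)+1) := by
    exact_mod_cast hid
  have f4 : 2 * ((a:ℚ)+1)^2 * M ≤ (m:ℚ) := by
    have := (Nat.cast_le (α := ℚ)).2 hmM
    push_cast at this
    convert this using 2 <;> push_cast <;> ring
  have f5 : (0:ℚ) < ((m+1).choose (a+1) : ℚ) := by
    exact_mod_cast hchoosepos
  have f6 : (0:ℚ) ≤ (m.choose a : ℚ) := Nat.cast_nonneg _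
  have f7 : (0:ℚ) ≤ (M:ℚ) := Nat.cast_nonneg _
  have f8 : (0:ℚ) ≤ (a:ℚ) := Nat.cast_nonneg _
  set Cq : ℚ := ((m+1).choose (a+1) : ℚ)
  set C'q : ℚ := (m.choose a : ℚ)
  have g1 : Cq < 2*((a:ℚ)+1)*(M:ℚ)*C'q := by linarith
  have g2 : Cq*((m:ℚ)+1) < (2*((a:ℚ)+1)*(M:ℚ)*C'q)*((m:ℚ)+1) := by
    have h0 : (0:ℚ) < (m:ℚ) + 1 := by positivity
    exact mul_lt_mul_of_pos_right g1 h0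
  have g3 : (2*((a:ℚ)+1)*(M:ℚ)*C'q)*((m:ℚ)+1) = 2*((a:ℚ)+1)^2*(M:ℚ)*Cq := by
    calc (2*((a:ℚ)+1)*(M:ℚ)*C'q)*((m:ℚ)+1)
        = 2*((a:ℚ)+1)*(M:ℚ)*(((m:ℚ)+1)*C'q) := by ring
    _ = 2*((a:ℚ)+1)*(M:ℚ)*(Cq*((a:ℚ)+1)) := by rw [f3]
    _ = 2*((a:ℚ)+1)^2*(M:ℚ)*Cq := by ring
  have g4 : 2*((a:ℚ)+1)^2*(M:ℚ)*Cq ≤ (m:ℚ)*Cq :=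
    mul_le_mul_of_nonneg_right f4 (le_of_lt f5)
  linarith
end

section
/- Let d ≥ 3 and let l, k, n be integers with 3 ≤ l ≤ k-d+1. If n > (d-1)^{1/(l-2)}·(k-d) + k + 2 (an inequality of real numbers, where (d-1)^{1/(l-2)} is the real (l-2)-th root of d-1), then |H(k,d,l+1)| > |H(k,d,l)|, where both families consist of k-element subsets of [n]. -/
open Finset

attribute [local instance] Classical.propDecidable

lemma count_prefix (n k u : ℕ) (C : Finset ℕ) (hC : C ⊆ Finset.Icc 1 n)
    (hCu : ∀ x ∈ C, x < u) (hu : 1 ≤ u) (hck : C.card ≤ k) :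
    (((Finset.Icc 1 n).powersetCard k).filter
        (fun F => C ⊆ F ∧ F \ C ⊆ Finset.Icc u n)).card
      = (n + 1 - u).choose (k - C.card) := by
  have hdisj : ∀ G : Finset ℕ, G ⊆ Finset.Icc u n → Disjoint C G := by
    intro G hG
    rw [Finset.disjoint_left]
    intro x hxC hxG
    have h1 := hCu x hxC
    have h2 := (Finset.mem_Icc.mp (hG hxG)).1
    omega
  have : (n + 1 - u).choose (k - C.card) = ((Finset.Icc u n).powersetCard (k - C.card)).card := by
    rw [card_powersetCard, Nat.card_Icc]
  rw [this]
  refine Finset.card_bij' (fun F _ => F \ C) (fun G _ => C ∪ G) ?_ ?_ ?_ ?_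
  · intro F hF
    simp only [Finset.mem_filter, Finset.mem_powersetCard] at hF
    obtain ⟨⟨hFn, hFk⟩, hCF, hFC⟩ := hF
    rw [Finset.mem_powersetCard]
    exact ⟨hFC, by rw [Finset.card_sdiff_of_subset hCF, hFk]⟩
  · intro G hG
    rw [Finset.mem_powersetCard] at hG
    obtain ⟨hGu, hGc⟩ := hG
    have hdj := hdisj G hGu
    simp only [Finset.mem_filter, Finset.mem_powersetCard]
    refine ⟨⟨?_, ?_⟩, Finset.subset_union_left, ?_⟩
    · refine Finset.union_subset hC (hGu.trans ?_)
      intro x hx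
      rw [Finset.mem_Icc] at hx ⊢
      omega
    · rw [Finset.card_union_of_disjoint hdj, hGc]
      omega
    · rw [Finset.union_sdiff_cancel_left hdj]
      exact hGu
  · intro F hF
    simp only [Finset.mem_filter] at hF
    exact Finset.union_sdiff_of_subset hF.2.1
  · intro G hG
    rw [Finset.mem_powersetCard] at hG
    exact Finset.union_sdiff_cancel_left (hdisj G hG.1)

lemma key1 (D a M r : ℕ) (hra : r ≤ a) (haM : a ≤ M) (h : D * a ^ r < M ^ r) :
    D * a.descFactorial r < M.descFactorial r := by
  rw [Nat.descFactorial_eq_prod_range, Nat.descFactorial_eq_prod_range]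
  have hpos : 0 < ∏ i ∈ range r, (a - i) :=
    Finset.prod_pos (fun i hi => by simp only [mem_range] at hi; omega)
  have h2 : (∏ i ∈ range r, (a - i)) * M ^ r ≤ (∏ i ∈ range r, (M - i)) * a ^ r := by
    calc (∏ i ∈ range r, (a - i)) * M ^ r = ∏ i ∈ range r, ((a - i) * M) := by
          rw [Finset.prod_mul_distrib, Finset.prod_const, card_range]
      _ ≤ ∏ i ∈ range r, ((M - i) * a) := by
          refine Finset.prod_le_prod (fun _ _ => Nat.zero_le _) (fun i hi => ?_)
          have e1 : (a - i) * M = a * M - i * M := Nat.sub_mul a i M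
          have e2 : (M - i) * a = M * a - i * a := Nat.sub_mul M i a
          have e3 : M * a = a * M := Nat.mul_comm M a
          have h4 : i * a ≤ i * M := Nat.mul_le_mul_left i haM
          have h5 : i * M ≤ a * M := Nat.mul_le_mul_right M (by simp only [mem_range] at hi; omega)
          omega
      _ = (∏ i ∈ range r, (M - i)) * a ^ r := by
          rw [Finset.prod_mul_distrib, Finset.prod_const, card_range]
  have h3 : D * (∏ i ∈ range r, (a - i)) * a ^ r < (∏ i ∈ range r, (M - i)) * a ^ r := by
    calc D * (∏ i ∈ range r, (a - i)) * a ^ r = (D * a ^ r) * ∏ i ∈ range r, (a - i) := by ring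
      _ < M ^ r * ∏ i ∈ range r, (a - i) := (Nat.mul_lt_mul_right hpos).mpr h
      _ = (∏ i ∈ range r, (a - i)) * M ^ r := Nat.mul_comm _ _
      _ ≤ (∏ i ∈ range r, (M - i)) * a ^ r := h2
  exact Nat.lt_of_mul_lt_mul_right h3

lemma key2 (D m a b r : ℕ) (hab : b + r = a) (ham : a ≤ m)
    (h : D * a.descFactorial r < (m - b).descFactorial r) :
    D * m.choose b < m.choose a := by
  have hbm : b ≤ m := by omega
  have hsplit : m.descFactorial a = m.descFactorial b * (m - b).descFactorial r := by
    rw [Nat.descFactorial_eq_prod_range, Nat.descFactorial_eq_prod_range,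
      Nat.descFactorial_eq_prod_range, ← hab, Finset.prod_range_add]
    congr 1
    exact Finset.prod_congr rfl (fun i _ => by omega)
  have hfa : Nat.factorial a = a.descFactorial r * Nat.factorial b := by
    have h1 := Nat.choose_mul_factorial_mul_factorial (show r ≤ a by omega)
    have h2 : a - r = b := by omega
    rw [h2] at h1
    rw [Nat.descFactorial_eq_factorial_mul_choose, ← h1]
    ring
  have hmb : m.descFactorial b = Nat.factorial b * m.choose b :=
    Nat.descFactorial_eq_factorial_mul_choose m b
  have hma : m.descFactorial a = Nat.factorial a * m.choose a :=
    Nat.descFactorial_eq_factorial_mul_choose m a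
  have hpos : 0 < m.descFactorial b := Nat.pos_of_ne_zero (fun hz => by have := Nat.descFactorial_eq_zero_iff_lt.mp hz; omega)
  have h4 : D * m.choose b * Nat.factorial a < m.choose a * Nat.factorial a := by
    calc D * m.choose b * Nat.factorial a
        = D * m.choose b * (a.descFactorial r * Nat.factorial b) := by rw [hfa]
      _ = D * a.descFactorial r * (Nat.factorial b * m.choose b) := by ring
      _ = D * a.descFactorial r * m.descFactorial b := by rw [hmb]
      _ < (m - b).descFactorial r * m.descFactorial b := (Nat.mul_lt_mul_right hpos).mpr h
      _ = m.descFactorial a := by rw [hsplit]; ring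
      _ = m.choose a * Nat.factorial a := by rw [hma]; ring
  exact Nat.lt_of_mul_lt_mul_right h4

lemma cardH (n k d l : ℕ) (hd : 3 ≤ d) (hl : 2 ≤ l) (hdlk : d + l ≤ k + 2) (hkn : k + 2 ≤ n) :
    (famH n k d l).card + (n + 1 - d - l).choose (k + 1 - d)
      = (n + 1 - d).choose (k + 1 - d) + (d - 1) * ((n + 1 - d - l).choose (k + 2 - d - l)) := by
  classical
  set S := (Finset.Icc 1 n).powersetCard k with hS
  have hmemS : ∀ F ∈ S, F ⊆ Finset.Icc 1 n ∧ F.card = k := by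
    intro F hF; rwa [hS, Finset.mem_powersetCard] at hF
  -- split famH into two disjoint parts
  have hsplit : famH n k d l
      = S.filter (fun F => Finset.Icc 1 (d-1) ⊆ F ∧ (F ∩ Finset.Icc d (d+l-1)).Nonempty)
        ∪ S.filter (fun F => (F ∩ Finset.Icc 1 (d-1)).card = d-2 ∧ Finset.Icc d (d+l-1) ⊆ F) := by
    rw [famH, Finset.filter_or]
  have hdisj : Disjoint
      (S.filter (fun F => Finset.Icc 1 (d-1) ⊆ F ∧ (F ∩ Finset.Icc d (d+l-1)).Nonempty))
      (S.filter (fun F => (F ∩ Finset.Icc 1 (d-1)).card = d-2 ∧ Finset.Icc d (d+l-1) ⊆ F)) := by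
    rw [Finset.disjoint_left]
    intro F h1 h2
    rw [Finset.mem_filter] at h1 h2
    have e1 : F ∩ Finset.Icc 1 (d-1) = Finset.Icc 1 (d-1) := Finset.inter_eq_right.mpr h1.2.1
    have e2 := h2.2.1
    rw [e1, Nat.card_Icc] at e2
    omega
  -- part A
  have hT : (S.filter (fun F => Finset.Icc 1 (d-1) ⊆ F)).card = (n+1-d).choose (k+1-d) := by
    have he : S.filter (fun F => Finset.Icc 1 (d-1) ⊆ F)
        = S.filter (fun F => Finset.Icc 1 (d-1) ⊆ F ∧ F \ Finset.Icc 1 (d-1) ⊆ Finset.Icc d n) := by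
      apply Finset.filter_congr
      intro F hF
      obtain ⟨hFn, -⟩ := hmemS F hF
      constructor
      · intro h
        refine ⟨h, fun x hx => ?_⟩
        rw [Finset.mem_sdiff, Finset.mem_Icc] at hx
        have := Finset.mem_Icc.mp (hFn hx.1)
        rw [Finset.mem_Icc]
        omega
      · exact fun h => h.1
    rw [he, hS, count_prefix n k d _ (Finset.Icc_subset_Icc le_rfl (by omega))
      (fun x hx => by rw [Finset.mem_Icc] at hx; omega) (by omega)
      (by rw [Nat.card_Icc]; omega)]
    rw [Nat.card_Icc]
    congr 1
    omega
  have hA' : (S.filter (fun F => Finset.Icc 1 (d-1) ⊆ F ∧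
        ¬ (F ∩ Finset.Icc d (d+l-1)).Nonempty)).card = (n+1-d-l).choose (k+1-d) := by
    have he : S.filter (fun F => Finset.Icc 1 (d-1) ⊆ F ∧ ¬ (F ∩ Finset.Icc d (d+l-1)).Nonempty)
        = S.filter (fun F => Finset.Icc 1 (d-1) ⊆ F ∧ F \ Finset.Icc 1 (d-1) ⊆ Finset.Icc (d+l) n) := by
      apply Finset.filter_congr
      intro F hF
      obtain ⟨hFn, -⟩ := hmemS F hF
      rw [Finset.not_nonempty_iff_eq_empty]
      constructor
      · rintro ⟨h1, h2⟩
        refine ⟨h1, fun x hx => ?_⟩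
        rw [Finset.mem_sdiff, Finset.mem_Icc] at hx
        have hxn := Finset.mem_Icc.mp (hFn hx.1)
        have hnotmem : x ∉ F ∩ Finset.Icc d (d+l-1) := by rw [h2]; exact Finset.notMem_empty x
        rw [Finset.mem_inter, Finset.mem_Icc] at hnotmem
        have h5 : ¬(d ≤ x ∧ x ≤ d + l - 1) := fun hc => hnotmem ⟨hx.1, hc⟩
        rw [Finset.mem_Icc]
        omega
      · rintro ⟨h1, h2⟩
        refine ⟨h1, ?_⟩
        rw [Finset.eq_empty_iff_forall_notMem]
        intro x hx
        rw [Finset.mem_inter, Finset.mem_Icc] at hx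
        have hxC : x ∉ Finset.Icc 1 (d-1) := by rw [Finset.mem_Icc]; omega
        have := h2 (Finset.mem_sdiff.mpr ⟨hx.1, hxC⟩)
        rw [Finset.mem_Icc] at this
        omega
    rw [he, hS, count_prefix n k (d+l) _ (Finset.Icc_subset_Icc le_rfl (by omega))
      (fun x hx => by rw [Finset.mem_Icc] at hx; omega) (by omega)
      (by rw [Nat.card_Icc]; omega)]
    rw [Nat.card_Icc]
    congr 1 <;> omega
  have hsumA : (S.filter (fun F => Finset.Icc 1 (d-1) ⊆ F ∧ (F ∩ Finset.Icc d (d+l-1)).Nonempty)).card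
      + (n+1-d-l).choose (k+1-d) = (n+1-d).choose (k+1-d) := by
    rw [← hA', ← hT]
    rw [← Finset.filter_filter, ← Finset.filter_filter]
    exact Finset.card_filter_add_card_filter_not _
  -- part B
  have hB : (S.filter (fun F => (F ∩ Finset.Icc 1 (d-1)).card = d-2 ∧ Finset.Icc d (d+l-1) ⊆ F)).card
      = (d - 1) * ((n+1-d-l).choose (k+2-d-l)) := by
    have hq : S.filter (fun F => (F ∩ Finset.Icc 1 (d-1)).card = d-2 ∧ Finset.Icc d (d+l-1) ⊆ F)
        = (Finset.Icc 1 (d-1)).biUnion (fun x => S.filter (fun F =>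
            (Finset.Icc 1 (d+l-1) \ {x}) ⊆ F ∧
            F \ (Finset.Icc 1 (d+l-1) \ {x}) ⊆ Finset.Icc (d+l) n)) := by
      ext F
      simp only [Finset.mem_biUnion, Finset.mem_filter]
      constructor
      · rintro ⟨hFS, hcard, hsub⟩
        obtain ⟨hFn, hFk⟩ := hmemS F hFS
        -- find missing element x
        have hne : ¬ Finset.Icc 1 (d-1) ⊆ F ∩ Finset.Icc 1 (d-1) := by
          intro h
          have := Finset.card_le_card h
          rw [Nat.card_Icc, hcard] at this
          omega
        obtain ⟨x, hx1, hx2⟩ := Finset.not_subset.mp hne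
        have hxIcc := Finset.mem_Icc.mp hx1
        have hxF : x ∉ F := fun h => hx2 (Finset.mem_inter.mpr ⟨h, hx1⟩)
        refine ⟨x, hx1, hFS, ?_, ?_⟩
        · intro y hy
          rw [Finset.mem_sdiff, Finset.mem_Icc, Finset.mem_singleton] at hy
          by_cases hyd : y ≤ d - 1
          · -- y ∈ F ∩ Icc 1 (d-1) since that inter equals Icc \ {x}
            have hsub2 : F ∩ Finset.Icc 1 (d-1) ⊆ Finset.Icc 1 (d-1) \ {x} := by
              intro z hz
              rw [Finset.mem_sdiff, Finset.mem_singleton]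
              rw [Finset.mem_inter] at hz
              exact ⟨hz.2, fun h => hxF (h ▸ hz.1)⟩
            have hceq : F ∩ Finset.Icc 1 (d-1) = Finset.Icc 1 (d-1) \ {x} := by
              apply Finset.eq_of_subset_of_card_le hsub2
              rw [Finset.card_sdiff_of_subset (Finset.singleton_subset_iff.mpr hx1),
                Nat.card_Icc, Finset.card_singleton, hcard]
              omega
            have : y ∈ Finset.Icc 1 (d-1) \ {x} := by
              rw [Finset.mem_sdiff, Finset.mem_Icc, Finset.mem_singleton]
              exact ⟨⟨hy.1.1, hyd⟩, hy.2⟩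
            rw [← hceq, Finset.mem_inter] at this
            exact this.1
          · exact hsub (Finset.mem_Icc.mpr ⟨by omega, hy.1.2⟩)
        · intro y hy
          rw [Finset.mem_sdiff, Finset.mem_sdiff, Finset.mem_Icc, Finset.mem_singleton] at hy
          have hyn := Finset.mem_Icc.mp (hFn hy.1)
          rw [Finset.mem_Icc]
          push_neg at hy
          rcases Nat.lt_or_ge y (d+l) with hc | hc
          · exfalso
            have := hy.2 ⟨hyn.1, by omega⟩
            exact hxF (this ▸ hy.1)
          · omega
      · rintro ⟨x, hx, hFS, hCF, hFC⟩
        obtain ⟨hFn, hFk⟩ := hmemS F hFS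
        have hxIcc := Finset.mem_Icc.mp hx
        have hxF : x ∉ F := by
          intro h
          have hxC : x ∉ Finset.Icc 1 (d+l-1) \ {x} := by
            rw [Finset.mem_sdiff, Finset.mem_singleton]; tauto
          have := hFC (Finset.mem_sdiff.mpr ⟨h, hxC⟩)
          rw [Finset.mem_Icc] at this
          omega
        refine ⟨hFS, ?_, ?_⟩
        · have hceq : F ∩ Finset.Icc 1 (d-1) = Finset.Icc 1 (d-1) \ {x} := by
            apply Finset.Subset.antisymm
            · intro z hz
              rw [Finset.mem_inter] at hz
              rw [Finset.mem_sdiff, Finset.mem_singleton]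
              exact ⟨hz.2, fun h => hxF (h ▸ hz.1)⟩
            · intro z hz
              rw [Finset.mem_sdiff, Finset.mem_Icc, Finset.mem_singleton] at hz
              rw [Finset.mem_inter, Finset.mem_Icc]
              refine ⟨hCF ?_, hz.1.1, hz.1.2⟩
              rw [Finset.mem_sdiff, Finset.mem_Icc, Finset.mem_singleton]
              exact ⟨⟨hz.1.1, by omega⟩, hz.2⟩
          rw [hceq, Finset.card_sdiff_of_subset (Finset.singleton_subset_iff.mpr hx),
            Nat.card_Icc, Finset.card_singleton]
          omega
        · intro y hy
          rw [Finset.mem_Icc] at hy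
          apply hCF
          rw [Finset.mem_sdiff, Finset.mem_Icc, Finset.mem_singleton]
          exact ⟨⟨by omega, hy.2⟩, by omega⟩
    rw [hq, Finset.card_biUnion]
    · have heach : ∀ x ∈ Finset.Icc 1 (d-1), (S.filter (fun F =>
          (Finset.Icc 1 (d+l-1) \ {x}) ⊆ F ∧
          F \ (Finset.Icc 1 (d+l-1) \ {x}) ⊆ Finset.Icc (d+l) n)).card
            = (n+1-d-l).choose (k+2-d-l) := by
        intro x hx
        have hxIcc := Finset.mem_Icc.mp hx
        have hxin : x ∈ Finset.Icc 1 (d+l-1) := Finset.mem_Icc.mpr ⟨hxIcc.1, by omega⟩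
        have hcC : (Finset.Icc 1 (d+l-1) \ {x}).card = d + l - 2 := by
          rw [Finset.card_sdiff_of_subset (Finset.singleton_subset_iff.mpr hxin),
            Nat.card_Icc, Finset.card_singleton]
          omega
        rw [hS, count_prefix n k (d+l) _ ?_ ?_ (by omega) (by rw [hcC]; omega)]
        · rw [hcC]; congr 1 <;> omega
        · intro z hz
          rw [Finset.mem_sdiff, Finset.mem_Icc] at hz
          rw [Finset.mem_Icc]
          omega
        · intro z hz
          rw [Finset.mem_sdiff, Finset.mem_Icc] at hz
          omega
      rw [Finset.sum_congr rfl heach, Finset.sum_const, Nat.card_Icc, smul_eq_mul]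
      all_goals (congr 1 <;> omega)
    · -- pairwise disjoint
      intro x hx y hy hxy
      rw [Function.onFun, Finset.disjoint_left]
      intro F h1 h2
      rw [Finset.mem_filter] at h1 h2
      rw [Finset.mem_coe, Finset.mem_Icc] at hx hy
      have hxF : x ∉ F := by
        intro h
        have hxC : x ∉ Finset.Icc 1 (d+l-1) \ {x} := by
          rw [Finset.mem_sdiff, Finset.mem_singleton]; tauto
        have := h1.2.2 (Finset.mem_sdiff.mpr ⟨h, hxC⟩)
        rw [Finset.mem_Icc] at this
        omega
      apply hxF
      apply h2.2.1
      rw [Finset.mem_sdiff, Finset.mem_Icc, Finset.mem_singleton]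
      exact ⟨⟨hx.1, by omega⟩, hxy⟩
  rw [hsplit, Finset.card_union_of_disjoint hdisj]
  omega

lemma keynum (n k d l : ℕ) (hd : 3 ≤ d) (hl : 3 ≤ l) (hlk : l + d ≤ k + 1)
    (hn : ((d : ℝ) - 1) ^ ((1 : ℝ) / ((l : ℝ) - 2)) * ((k : ℝ) - (d : ℝ)) + k + 2
      < (n : ℝ)) :
    (d - 1) * (n - d - l).choose (k + 2 - d - l) < (n - d - l).choose (k - d) := by
  have hk : d + 2 ≤ k := by omega
  have hd3 : (3:ℝ) ≤ (d:ℝ) := by exact_mod_cast hd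
  have hl3 : (3:ℝ) ≤ (l:ℝ) := by exact_mod_cast hl
  have hdkr : (d:ℝ) ≤ (k:ℝ) := by exact_mod_cast (by omega : d ≤ k)
  have hc1 : (1:ℝ) ≤ ((d:ℝ)-1) ^ ((1:ℝ)/((l:ℝ)-2)) :=
    Real.one_le_rpow (by linarith) (div_nonneg zero_le_one (by linarith))
  have hkd : (0:ℝ) ≤ (k:ℝ) - d := by linarith
  have h2 : (k:ℝ) - d + k + 2 < n := by nlinarith
  have hnk : 2*k + 3 ≤ n + d := by
    have h3 : (2*k+2 : ℝ) < (n:ℝ) + d := by push_cast; linarith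
    have h4 : 2*k+2 < n+d := by exact_mod_cast h3
    omega
  set r := l - 2 with hr
  have hrl : ((r:ℕ):ℝ) = (l:ℝ) - 2 := by
    rw [hr, Nat.cast_sub (by omega : 2 ≤ l)]; norm_num
  have hcr : (((d:ℝ)-1) ^ ((1:ℝ)/((l:ℝ)-2))) ^ r = (d:ℝ)-1 := by
    rw [← Real.rpow_natCast (((d:ℝ)-1) ^ ((1:ℝ)/((l:ℝ)-2))) r, hrl,
      ← Real.rpow_mul (by linarith : (0:ℝ) ≤ (d:ℝ)-1), one_div,
      inv_mul_cancel₀ (by linarith : (l:ℝ)-2 ≠ 0), Real.rpow_one]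
  have hkey : ((d:ℝ)-1) * ((k:ℝ)-d)^r < ((n:ℝ)-k-2)^r := by
    have h3 : ((d:ℝ)-1)^((1:ℝ)/((l:ℝ)-2)) * ((k:ℝ)-d) < (n:ℝ)-k-2 := by linarith
    have h4 := pow_lt_pow_left₀ h3
      (mul_nonneg (Real.rpow_nonneg (by linarith) _) hkd) (show r ≠ 0 by omega)
    rw [mul_pow, hcr] at h4
    exact h4
  have hnat : (d-1) * (k-d)^r < (n-k-2)^r := by
    have e1 : ((d-1:ℕ):ℝ) = (d:ℝ)-1 := by rw [Nat.cast_sub (by omega : 1 ≤ d)]; norm_num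
    have e2 : ((k-d:ℕ):ℝ) = (k:ℝ)-d := by rw [Nat.cast_sub (by omega : d ≤ k)]
    have e3 : ((n-k-2:ℕ):ℝ) = (n:ℝ)-k-2 := by
      rw [Nat.sub_sub, Nat.cast_sub (by omega : k + 2 ≤ n)]; push_cast; ring
    rw [← e1, ← e2, ← e3] at hkey
    exact_mod_cast hkey
  have h5 := key1 (d-1) (k-d) (n-k-2) r (by omega) (by omega) hnat
  have h6 : (n - d - l) - (k + 2 - d - l) = n - k - 2 := by omega
  exact key2 (d-1) (n-d-l) (k-d) (k+2-d-l) r (by omega) (by omega) (h6 ▸ h5)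

theorem stmt17 (n k d l : ℕ) (hd : 3 ≤ d) (hl : 3 ≤ l) (hlk : l + d ≤ k + 1)
    (hn : ((d : ℝ) - 1) ^ ((1 : ℝ) / ((l : ℝ) - 2)) * ((k : ℝ) - (d : ℝ)) + k + 2
      < (n : ℝ)) :
    (famH n k d l).card < (famH n k d (l + 1)).card := by
  have hk : d + 2 ≤ k := by omega
  have hd3 : (3:ℝ) ≤ (d:ℝ) := by exact_mod_cast hd
  have hl3 : (3:ℝ) ≤ (l:ℝ) := by exact_mod_cast hl
  have hc1 : (1:ℝ) ≤ ((d:ℝ)-1) ^ ((1:ℝ)/((l:ℝ)-2)) :=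
    Real.one_le_rpow (by linarith) (div_nonneg zero_le_one (by linarith))
  have hkd : (0:ℝ) ≤ (k:ℝ) - d := by
    have : (d:ℝ) ≤ (k:ℝ) := by exact_mod_cast (by omega : d ≤ k)
    linarith
  have hnk : 2*k + 3 ≤ n + d := by
    have h2 : (2*k+2 : ℝ) < (n:ℝ) + d := by nlinarith
    have h4 : 2*k+2 < n+d := by exact_mod_cast h2
    omega
  have hkn : k + 2 ≤ n := by omega
  have e1 := cardH n k d l hd (by omega) (by omega) hkn
  have e2 := cardH n k d (l+1) hd (by omega) (by omega) hkn
  have key := keynum n k d l hd hl hlk hn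
  have i1 : n + 1 - d - l = (n - d - l) + 1 := by omega
  have i2 : n + 1 - d - (l+1) = n - d - l := by omega
  have i3 : k + 1 - d = (k - d) + 1 := by omega
  have i4 : k + 2 - d - l = (k + 1 - d - l) + 1 := by omega
  have i5 : k + 2 - d - (l+1) = k + 1 - d - l := by omega
  rw [i1, i3, i4, Nat.choose_succ_succ, Nat.choose_succ_succ, Nat.mul_add] at e1
  rw [i2, i3, i5] at e2
  rw [i4] at key
  linarith [e1, e2, key]
end

section
/- Let d ≥ 3. (1) If k ≥ d+1 and n ≥ 2k-d+1, then |H(k,d,k-d+1)| > |G(k,d)|. (2) If k ≥ d+4 and n > max{2k+6, 24(d-1)}, then |H(k,d,k-d)| < |G(k,d)|; while if k ∈ {d+2, d+3} and n ≥ 2k-d+2, then |H(k,d,k-d)| > |G(k,d)|. Here all families consist of k-element subsets of [n]. -/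
open Finset

attribute [local instance] Classical.propDecidable

lemma card_ss (T S : Finset ℕ) (hS : S ⊆ T) (k : ℕ) (hk : S.card ≤ k) :
    ((T.powersetCard k).filter (fun F => S ⊆ F)).card
      = (T.card - S.card).choose (k - S.card) := by
  rw [← Finset.card_sdiff_of_subset hS, ← Finset.card_powersetCard]
  apply Finset.card_bij (fun F _ => F \ S)
  · intro F hF
    simp only [Finset.mem_filter, Finset.mem_powersetCard] at hF
    rw [Finset.mem_powersetCard]
    exact ⟨Finset.sdiff_subset_sdiff hF.1.1 subset_rfl,
      by rw [Finset.card_sdiff_of_subset hF.2, hF.1.2]⟩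
  · intro F hF F' hF' h
    simp only [Finset.mem_filter, Finset.mem_powersetCard] at hF hF'
    have : F \ S ∪ S = F' \ S ∪ S := by rw [h]
    rwa [Finset.sdiff_union_of_subset hF.2, Finset.sdiff_union_of_subset hF'.2] at this
  · intro G hG
    rw [Finset.mem_powersetCard] at hG
    have hdisj : Disjoint G S := Finset.disjoint_of_subset_left hG.1 Finset.sdiff_disjoint
    refine ⟨G ∪ S, ?_, by rw [Finset.union_sdiff_right, Finset.sdiff_eq_self_of_disjoint hdisj]⟩
    simp only [Finset.mem_filter, Finset.mem_powersetCard]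
    refine ⟨⟨Finset.union_subset (hG.1.trans Finset.sdiff_subset) hS, ?_⟩, Finset.subset_union_right⟩
    rw [Finset.card_union_of_disjoint hdisj, hG.2]
    omega

lemma card_ss_avoid (n k : ℕ) (S W : Finset ℕ) (hS : S ⊆ Finset.Icc 1 n)
    (hdisj : Disjoint S W) (hW : W ⊆ Finset.Icc 1 n) (hk : S.card ≤ k) :
    (((Finset.Icc 1 n).powersetCard k).filter (fun F => S ⊆ F ∧ F ∩ W = ∅)).card
      = (n - W.card - S.card).choose (k - S.card) := by
  have he : ((Finset.Icc 1 n).powersetCard k).filter (fun F => S ⊆ F ∧ F ∩ W = ∅)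
      = ((Finset.Icc 1 n \ W).powersetCard k).filter (fun F => S ⊆ F) := by
    ext F
    simp only [Finset.mem_filter, Finset.mem_powersetCard]
    constructor
    · rintro ⟨⟨h1, h2⟩, h3, h4⟩
      refine ⟨⟨fun x hx => Finset.mem_sdiff.2 ⟨h1 hx, fun hxW => ?_⟩, h2⟩, h3⟩
      have : x ∈ F ∩ W := Finset.mem_inter.2 ⟨hx, hxW⟩
      rw [h4] at this; exact absurd this (Finset.notMem_empty x)
    · rintro ⟨⟨h1, h2⟩, h3⟩
      refine ⟨⟨h1.trans Finset.sdiff_subset, h2⟩, h3, ?_⟩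
      rw [Finset.eq_empty_iff_forall_notMem]
      intro x hx
      rw [Finset.mem_inter] at hx
      exact (Finset.mem_sdiff.1 (h1 hx.1)).2 hx.2
  rw [he, card_ss _ _ (Finset.subset_sdiff.2 ⟨hS, hdisj⟩) k hk,
    Finset.card_sdiff_of_subset hW, Nat.card_Icc]
  norm_num

lemma two_choose (n : ℕ) : 2 * (n+2).choose 2 = (n+2) * (n+1) := by
  induction n with
  | zero => rfl
  | succ p ih =>
    rw [show p+1+2 = (p+2)+1 from rfl, Nat.choose_succ_succ, Nat.mul_add, ih,
      Nat.choose_one_right]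
    ring

lemma six_choose (n : ℕ) : 6 * (n+3).choose 3 = (n+3) * (n+2) * (n+1) := by
  induction n with
  | zero => rfl
  | succ p ih =>
    rw [show p+1+3 = (p+3)+1 from rfl, Nat.choose_succ_succ, Nat.mul_add, ih]
    have h2 : 6 * (p+3).choose 2 = 3 * ((p+3) * (p+2)) := by
      rw [show p+3 = (p+1)+2 from rfl, show (6:ℕ) = 3*2 by rfl, Nat.mul_assoc,
        two_choose]
    rw [h2]
    ring

lemma choose_mono_half {N a b : ℕ} (hab : a ≤ b) (hb : b ≤ N / 2) :
    N.choose a ≤ N.choose b := by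
  induction b with
  | zero => simp_all
  | succ c ih =>
    rcases Nat.eq_or_lt_of_le hab with h | h
    · rw [h]
    · exact le_trans (ih (by omega) (by omega))
        (Nat.choose_le_succ_of_lt_half_left (by omega))

lemma choose_three_le {N j : ℕ} (h3 : 3 ≤ j) (hj : j + 3 ≤ N) :
    N.choose 3 ≤ N.choose j := by
  rcases le_or_gt j (N / 2) with h | h
  · exact choose_mono_half h3 h
  · rw [← Nat.choose_symm (by omega : j ≤ N)]
    exact choose_mono_half (by omega) (by omega)

lemma filter_or_card {β : Type*} (s : Finset β) (p q : β → Prop)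
    (hpq : DecidablePred (fun x => p x ∨ q x)) (hp : DecidablePred p) (hq : DecidablePred q)
    (h : ∀ x ∈ s, p x → ¬ q x) :
    (@Finset.filter β (fun x => p x ∨ q x) hpq s).card
      = (@Finset.filter β p hp s).card + (@Finset.filter β q hq s).card := by
  classical
  have he : @Finset.filter β (fun x => p x ∨ q x) hpq s
      = @Finset.filter β p hp s ∪ @Finset.filter β q hq s := by
    ext a
    simp only [Finset.mem_filter, Finset.mem_union]
    tauto
  rw [he, Finset.card_union_of_disjoint]
  rw [Finset.disjoint_left]
  intro a ha hb
  rw [Finset.mem_filter] at ha hb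
  exact h a ha.1 ha.2 hb.2

lemma filter_congr'' {β : Type*} (s : Finset β) (p q : β → Prop)
    (hp : DecidablePred p) (hq : DecidablePred q)
    (h : ∀ x ∈ s, p x ↔ q x) :
    @Finset.filter β p hp s = @Finset.filter β q hq s := by
  classical
  rw [Finset.filter_congr_decidable, Finset.filter_congr_decidable]
  exact Finset.filter_congr h

lemma filter_exists_card {α β : Type*} [DecidableEq β] (s : Finset β) (I : Finset α)
    (p : α → β → Prop) (hex : DecidablePred (fun F => ∃ j ∈ I, p j F))
    (hp : ∀ a, DecidablePred (p a))
    (hdisj : ∀ i ∈ I, ∀ j ∈ I, i ≠ j → ∀ x, p i x → ¬ p j x) :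
    (@Finset.filter β (fun F => ∃ j ∈ I, p j F) hex s).card
      = ∑ j ∈ I, (@Finset.filter β (p j) (hp j) s).card := by
  classical
  rw [Finset.filter_congr_decidable]
  have hc : ∀ j, @Finset.filter β (p j) (hp j) s = s.filter (p j) := by
    intro j
    rw [Finset.filter_congr_decidable]
  rw [Finset.sum_congr rfl (fun j _ => congrArg Finset.card (hc j))]
  rw [← Finset.card_biUnion (fun i hi j hj hij => ?_)]
  · congr 1
    ext F
    simp only [Finset.mem_biUnion, Finset.mem_filter]
    constructor
    · rintro ⟨hF, j, hj, hpj⟩; exact ⟨j, hj, hF, hpj⟩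
    · rintro ⟨j, hj, hF, hpj⟩; exact ⟨hF, j, hj, hpj⟩
  · rw [Function.onFun, Finset.disjoint_left]
    intro a ha hb
    rw [Finset.mem_filter] at ha hb
    exact hdisj i hi j hj hij a ha.2 hb.2

lemma filter_image_card {α β : Type*} [DecidableEq β] (s : Finset β) (I : Finset α)
    (g : α → β) (hex : DecidablePred (fun F => ∃ i ∈ I, F = g i))
    (hmem : ∀ i ∈ I, g i ∈ s) (hinj : ∀ i ∈ I, ∀ j ∈ I, g i = g j → i = j) :
    (@Finset.filter β (fun F => ∃ i ∈ I, F = g i) hex s).card = I.card := by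
  classical
  rw [Finset.filter_congr_decidable]
  have : s.filter (fun F => ∃ i ∈ I, F = g i) = I.image g := by
    ext F
    simp only [Finset.mem_filter, Finset.mem_image]
    constructor
    · rintro ⟨_, i, hi, rfl⟩; exact ⟨i, hi, rfl⟩
    · rintro ⟨i, hi, rfl⟩; exact ⟨hmem i hi, i, hi, rfl⟩
  rw [this, Finset.card_image_of_injOn hinj]

lemma famH_card (n k d l : ℕ) (hd : 3 ≤ d) (hl : 1 ≤ l) (hdl : d - 1 + l ≤ k)
    (hn : d + l - 1 ≤ n) :
    (famH n k d l).card + (n - l - (d-1)).choose (k - (d-1))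
      = (n - (d-1)).choose (k - (d-1)) + (d-1) * ((n - 1 - (d-2+l)).choose (k - (d-2+l))) := by
  classical
  unfold famH
  have hIcard : (Finset.Icc 1 (d-1)).card = d - 1 := by rw [Nat.card_Icc]; omega
  have hWcard : (Finset.Icc d (d+l-1)).card = l := by rw [Nat.card_Icc]; omega
  have hIsub : Finset.Icc 1 (d-1) ⊆ Finset.Icc 1 n := Finset.Icc_subset_Icc le_rfl (by omega)
  have hWsub : Finset.Icc d (d+l-1) ⊆ Finset.Icc 1 n := Finset.Icc_subset_Icc (by omega) (by omega)
  have hIW : Disjoint (Finset.Icc 1 (d-1)) (Finset.Icc d (d+l-1)) := by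
    rw [Finset.disjoint_left]
    intro a ha hb
    rw [Finset.mem_Icc] at ha hb; omega
  have e0 : ((((Finset.Icc 1 n).powersetCard k)).filter (fun F => (Finset.Icc 1 (d-1) ⊆ F ∧ (F ∩ Finset.Icc d (d+l-1)).Nonempty) ∨ ((F ∩ Finset.Icc 1 (d-1)).card = d-2 ∧ Finset.Icc d (d+l-1) ⊆ F))).card
      = ((((Finset.Icc 1 n).powersetCard k)).filter (fun F => Finset.Icc 1 (d-1) ⊆ F ∧ (F ∩ Finset.Icc d (d+l-1)).Nonempty)).card
        + ((((Finset.Icc 1 n).powersetCard k)).filter (fun F => (F ∩ Finset.Icc 1 (d-1)).card = d-2 ∧ Finset.Icc d (d+l-1) ⊆ F)).card := by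
    refine filter_or_card ((Finset.Icc 1 n).powersetCard k) (fun F => (Finset.Icc 1 (d-1) ⊆ F ∧ (F ∩ Finset.Icc d (d+l-1)).Nonempty)) (fun F => ((F ∩ Finset.Icc 1 (d-1)).card = d-2 ∧ Finset.Icc d (d+l-1) ⊆ F)) _ _ _ (fun F _ hA hB => ?_)
    obtain ⟨hA1, _⟩ := hA
    obtain ⟨hB1, _⟩ := hB
    rw [Finset.inter_eq_right.2 hA1, hIcard] at hB1
    omega
  have e1 : ((((Finset.Icc 1 n).powersetCard k)).filter (fun F => (Finset.Icc 1 (d-1) ⊆ F ∧ (F ∩ Finset.Icc d (d+l-1)).Nonempty) ∨ (Finset.Icc 1 (d-1) ⊆ F ∧ F ∩ Finset.Icc d (d+l-1) = ∅))).card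
      = ((((Finset.Icc 1 n).powersetCard k)).filter (fun F => Finset.Icc 1 (d-1) ⊆ F ∧ (F ∩ Finset.Icc d (d+l-1)).Nonempty)).card
        + ((((Finset.Icc 1 n).powersetCard k)).filter (fun F => Finset.Icc 1 (d-1) ⊆ F ∧ F ∩ Finset.Icc d (d+l-1) = ∅)).card := by
    refine filter_or_card ((Finset.Icc 1 n).powersetCard k) (fun F => (Finset.Icc 1 (d-1) ⊆ F ∧ (F ∩ Finset.Icc d (d+l-1)).Nonempty)) (fun F => (Finset.Icc 1 (d-1) ⊆ F ∧ F ∩ Finset.Icc d (d+l-1) = ∅)) _ _ _ (fun F _ hA hB => ?_)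
    obtain ⟨_, hA2⟩ := hA
    rw [hB.2] at hA2
    exact Finset.not_nonempty_empty hA2
  have e2 : (((Finset.Icc 1 n).powersetCard k)).filter (fun F => (Finset.Icc 1 (d-1) ⊆ F ∧ (F ∩ Finset.Icc d (d+l-1)).Nonempty) ∨ (Finset.Icc 1 (d-1) ⊆ F ∧ F ∩ Finset.Icc d (d+l-1) = ∅))
      = (((Finset.Icc 1 n).powersetCard k)).filter (fun F => Finset.Icc 1 (d-1) ⊆ F) := by
    apply Finset.filter_congr
    intro F _
    constructor
    · rintro (h | h) <;> exact h.1
    · intro h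
      rcases Finset.eq_empty_or_nonempty (F ∩ Finset.Icc d (d+l-1)) with he | hne
      · exact Or.inr ⟨h, he⟩
      · exact Or.inl ⟨h, hne⟩
  have e3 : ((((Finset.Icc 1 n).powersetCard k)).filter (fun F => Finset.Icc 1 (d-1) ⊆ F)).card = (n - (d-1)).choose (k - (d-1)) := by
    rw [card_ss _ _ hIsub k (by omega : (Finset.Icc 1 (d-1)).card ≤ k), Nat.card_Icc, hIcard]
    norm_num
  have e4 : ((((Finset.Icc 1 n).powersetCard k)).filter (fun F => Finset.Icc 1 (d-1) ⊆ F ∧ F ∩ Finset.Icc d (d+l-1) = ∅)).card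
      = (n - l - (d-1)).choose (k - (d-1)) := by
    rw [card_ss_avoid n k _ _ hIsub hIW hWsub (by omega : (Finset.Icc 1 (d-1)).card ≤ k), hIcard, hWcard]
  -- part B
  have f0 : (((Finset.Icc 1 n).powersetCard k)).filter (fun F => (F ∩ Finset.Icc 1 (d-1)).card = d-2 ∧ Finset.Icc d (d+l-1) ⊆ F)
      = (((Finset.Icc 1 n).powersetCard k)).filter (fun F => ∃ j ∈ (Finset.Icc 1 (d-1)), ((Finset.Icc 1 (d-1)).erase j ∪ Finset.Icc d (d+l-1) ⊆ F ∧ F ∩ {j} = ∅)) := by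
    apply Finset.filter_congr
    intro F _
    constructor
    · rintro ⟨hc, hWF⟩
      have hcard1 : ((Finset.Icc 1 (d-1)) \ F).card = 1 := by
        have := Finset.card_sdiff_add_card_inter (Finset.Icc 1 (d-1)) F
        rw [Finset.inter_comm (Finset.Icc 1 (d-1)) F, hc, hIcard] at this
        omega
      obtain ⟨j, hj⟩ := Finset.card_eq_one.1 hcard1
      have hjmem : j ∈ (Finset.Icc 1 (d-1)) \ F := by rw [hj]; exact Finset.mem_singleton_self j
      have hjI : j ∈ (Finset.Icc 1 (d-1)) := (Finset.mem_sdiff.1 hjmem).1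
      have hjF : j ∉ F := (Finset.mem_sdiff.1 hjmem).2
      refine ⟨j, hjI, Finset.union_subset (fun x hx => ?_) hWF, ?_⟩
      · rw [Finset.mem_erase] at hx
        by_contra hxF
        have : x ∈ (Finset.Icc 1 (d-1)) \ F := Finset.mem_sdiff.2 ⟨hx.2, hxF⟩
        rw [hj, Finset.mem_singleton] at this
        exact hx.1 this
      · rw [Finset.eq_empty_iff_forall_notMem]
        intro x hx
        rw [Finset.mem_inter, Finset.mem_singleton] at hx
        exact hjF (hx.2 ▸ hx.1)
    · rintro ⟨j, hjI, hsub, hempty⟩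
      have hjF : j ∉ F := by
        intro hjF
        have : j ∈ F ∩ {j} := Finset.mem_inter.2 ⟨hjF, Finset.mem_singleton_self j⟩
        rw [hempty] at this; exact Finset.notMem_empty j this
      have heq : F ∩ (Finset.Icc 1 (d-1)) = (Finset.Icc 1 (d-1)).erase j := by
        apply Finset.Subset.antisymm
        · intro x hx
          rw [Finset.mem_inter] at hx
          rw [Finset.mem_erase]
          exact ⟨fun h => hjF (h ▸ hx.1), hx.2⟩
        · intro x hx
          exact Finset.mem_inter.2
            ⟨hsub (Finset.mem_union_left _ hx), Finset.mem_of_mem_erase hx⟩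
      refine ⟨?_, fun x hx => hsub (Finset.mem_union_right _ hx)⟩
      rw [heq, Finset.card_erase_of_mem hjI, hIcard]
      omega
  have f1 : ((((Finset.Icc 1 n).powersetCard k)).filter (fun F => ∃ j ∈ (Finset.Icc 1 (d-1)), ((Finset.Icc 1 (d-1)).erase j ∪ Finset.Icc d (d+l-1) ⊆ F ∧ F ∩ {j} = ∅))).card
      = ∑ j ∈ (Finset.Icc 1 (d-1)), ((((Finset.Icc 1 n).powersetCard k)).filter (fun F => (Finset.Icc 1 (d-1)).erase j ∪ Finset.Icc d (d+l-1) ⊆ F ∧ F ∩ {j} = ∅)).card := by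
    refine filter_exists_card (((Finset.Icc 1 n).powersetCard k)) (Finset.Icc 1 (d-1)) (fun j F => (Finset.Icc 1 (d-1)).erase j ∪ Finset.Icc d (d+l-1) ⊆ F ∧ F ∩ {j} = ∅) _ _ (fun i hi j hj hij F hpi hpj => ?_)
    obtain ⟨hpi1, _⟩ := hpi
    obtain ⟨_, hpj2⟩ := hpj
    have hjF : j ∈ F := hpi1 (Finset.mem_union_left _ (Finset.mem_erase.2 ⟨hij.symm, hj⟩))
    have : j ∈ F ∩ {j} := Finset.mem_inter.2 ⟨hjF, Finset.mem_singleton_self j⟩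
    rw [hpj2] at this
    exact Finset.notMem_empty j this
  have f2 : ∀ j ∈ (Finset.Icc 1 (d-1)), ((((Finset.Icc 1 n).powersetCard k)).filter (fun F => ((Finset.Icc 1 (d-1)).erase j ∪ Finset.Icc d (d+l-1) ⊆ F ∧ F ∩ {j} = ∅))).card
      = (n - 1 - (d-2+l)).choose (k - (d-2+l)) := by
    intro j hj
    have hjb := hj
    rw [Finset.mem_Icc] at hjb
    have hjW : j ∉ (Finset.Icc d (d+l-1)) := by rw [Finset.mem_Icc]; omega
    have hSsub : (Finset.Icc 1 (d-1)).erase j ∪ Finset.Icc d (d+l-1) ⊆ Finset.Icc 1 n :=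
      Finset.union_subset ((Finset.erase_subset j (Finset.Icc 1 (d-1))).trans hIsub) hWsub
    have hSd : Disjoint ((Finset.Icc 1 (d-1)).erase j ∪ Finset.Icc d (d+l-1)) {j} := by
      rw [Finset.disjoint_left]
      intro a ha hb
      rw [Finset.mem_singleton] at hb
      subst hb
      rcases Finset.mem_union.1 ha with h | h
      · exact (Finset.mem_erase.1 h).1 rfl
      · exact hjW h
    have hjsub : ({j} : Finset ℕ) ⊆ Finset.Icc 1 n := by
      intro x hx
      rw [Finset.mem_singleton] at hx
      subst hx
      exact hIsub hj
    have hScard : ((Finset.Icc 1 (d-1)).erase j ∪ Finset.Icc d (d+l-1)).card = d - 2 + l := by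
      rw [Finset.card_union_of_disjoint (Finset.disjoint_of_subset_left
        (Finset.erase_subset j (Finset.Icc 1 (d-1))) hIW), Finset.card_erase_of_mem hj, hIcard, hWcard]
      omega
    rw [card_ss_avoid n k _ _ hSsub hSd hjsub (by omega), hScard, Finset.card_singleton]
  have e5 : (((((Finset.Icc 1 n).powersetCard k)).filter (fun F => (F ∩ Finset.Icc 1 (d-1)).card = d-2 ∧ Finset.Icc d (d+l-1) ⊆ F))).card
      = (d-1) * ((n - 1 - (d-2+l)).choose (k - (d-2+l))) := by
    rw [f0, f1, Finset.sum_congr rfl f2, Finset.sum_const, hIcard, smul_eq_mul]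
  have e2c := congrArg Finset.card e2
  omega

lemma famG_card (n k d : ℕ) (hd : 3 ≤ d) (hk : d + 1 ≤ k) (hn : k + 2 ≤ n) :
    (famG n k d).card + (n - (k-d) - (d-1)).choose (k - (d-1))
      = (n - (d-1)).choose (k - (d-1)) + (n - (k-d) - (d+1)).choose (k - (d+1))
        + (n - k - 1) + (n - k - 1) + (d-1) := by
  classical
  unfold famG
  have hIcard : (Finset.Icc 1 (d-1)).card = d - 1 := by rw [Nat.card_Icc]; omega
  have hWcard : (Finset.Icc d (k-1)).card = k - d := by rw [Nat.card_Icc]; omega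
  have hIsub : Finset.Icc 1 (d-1) ⊆ Finset.Icc 1 n := Finset.Icc_subset_Icc le_rfl (by omega)
  have hWsub : Finset.Icc d (k-1) ⊆ Finset.Icc 1 n := Finset.Icc_subset_Icc (by omega) (by omega)
  have hIW : Disjoint (Finset.Icc 1 (d-1)) (Finset.Icc d (k-1)) := by
    rw [Finset.disjoint_left]
    intro a ha hb
    rw [Finset.mem_Icc] at ha hb; omega
  have hkk : ({k, k+1} : Finset ℕ).card = 2 := by
    rw [Finset.card_insert_of_notMem (by simp), Finset.card_singleton]
  have hIkk : Disjoint (Finset.Icc 1 (d-1)) ({k, k+1} : Finset ℕ) := by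
    rw [Finset.disjoint_left]
    intro a ha hb
    rw [Finset.mem_Icc] at ha
    rw [Finset.mem_insert, Finset.mem_singleton] at hb
    omega
  have hS2card : ((Finset.Icc 1 (d-1)) ∪ {k, k+1}).card = d + 1 := by
    rw [Finset.card_union_of_disjoint hIkk, hIcard, hkk]; omega
  -- rewrite famG predicate into disjoint pieces
  have g0 : (((Finset.Icc 1 n).powersetCard k)).filter (fun F =>
        (Finset.Icc 1 (d-1) ⊆ F ∧ (F ∩ Finset.Icc d (k-1)).Nonempty) ∨
        (∃ i ∈ Finset.Icc (k+2) n, F = Finset.Icc 2 k ∪ {i}) ∨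
        (Finset.Icc 1 (d-1) ∪ {k, k+1} ⊆ F) ∨
        (∃ i ∈ Finset.Icc (k+2) n, F = Finset.Icc 2 (k-1) ∪ {k+1, i}) ∨
        ((F ∩ Finset.Icc 1 (d-1)).card = d-2 ∧ Finset.Icc d (k+1) ⊆ F))
      = (((Finset.Icc 1 n).powersetCard k)).filter (fun F => (Finset.Icc 1 (d-1) ⊆ F ∧ (F ∩ Finset.Icc d (k-1)).Nonempty) ∨ ((Finset.Icc 1 (d-1) ∪ {k, k+1} ⊆ F ∧ F ∩ Finset.Icc d (k-1) = ∅) ∨ ((∃ i ∈ Finset.Icc (k+2) n, F = Finset.Icc 2 k ∪ {i}) ∨ ((∃ i ∈ Finset.Icc (k+2) n, F = Finset.Icc 2 (k-1) ∪ {k+1, i}) ∨ (∃ j ∈ Finset.Icc 1 (d-1), F = Finset.Icc 1 (k+1) \ {j}))))) := by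
    refine filter_congr'' _ _ _ _ _ (fun F hF => ?_)
    rw [Finset.mem_powersetCard] at hF
    obtain ⟨hFsub, hFcard⟩ := hF
    constructor
    · rintro (h1 | h2 | h3 | h4 | h5)
      · exact Or.inl h1
      · exact Or.inr (Or.inr (Or.inl h2))
      · rcases Finset.eq_empty_or_nonempty (F ∩ (Finset.Icc d (k-1))) with he | hne
        · exact Or.inr (Or.inl ⟨h3, he⟩)
        · exact Or.inl ⟨(Finset.subset_union_left).trans h3, hne⟩
      · exact Or.inr (Or.inr (Or.inr (Or.inl h4)))
      · -- (v) implies R5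
        obtain ⟨hc, hsub⟩ := h5
        have hcard1 : ((Finset.Icc 1 (d-1)) \ F).card = 1 := by
          have := Finset.card_sdiff_add_card_inter (Finset.Icc 1 (d-1)) F
          rw [Finset.inter_comm (Finset.Icc 1 (d-1)) F, hc, hIcard] at this
          omega
        obtain ⟨j, hj⟩ := Finset.card_eq_one.1 hcard1
        have hjmem : j ∈ (Finset.Icc 1 (d-1)) \ F := by rw [hj]; exact Finset.mem_singleton_self j
        have hjI : j ∈ (Finset.Icc 1 (d-1)) := (Finset.mem_sdiff.1 hjmem).1
        have hjF : j ∉ F := (Finset.mem_sdiff.1 hjmem).2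
        have hjb : 1 ≤ j ∧ j ≤ d - 1 := Finset.mem_Icc.1 hjI
        refine Or.inr (Or.inr (Or.inr (Or.inr ⟨j, hjI, ?_⟩)))
        have hsub2 : Finset.Icc 1 (k+1) \ {j} ⊆ F := by
          intro x hx
          rw [Finset.mem_sdiff, Finset.mem_Icc, Finset.mem_singleton] at hx
          rcases le_or_gt x (d-1) with hxd | hxd
          · have hxI : x ∈ (Finset.Icc 1 (d-1)) := Finset.mem_Icc.2 ⟨hx.1.1, hxd⟩
            by_contra hxF
            have : x ∈ (Finset.Icc 1 (d-1)) \ F := Finset.mem_sdiff.2 ⟨hxI, hxF⟩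
            rw [hj, Finset.mem_singleton] at this
            exact hx.2 this
          · exact hsub (Finset.mem_Icc.2 ⟨by omega, hx.1.2⟩)
        have hcard2 : (Finset.Icc 1 (k+1) \ {j}).card = k := by
          rw [Finset.card_sdiff_of_subset (by
            intro x hx
            rw [Finset.mem_singleton] at hx
            subst hx
            exact Finset.mem_Icc.2 ⟨hjb.1, by omega⟩), Nat.card_Icc,
            Finset.card_singleton]
          omega
        exact (Finset.eq_of_subset_of_card_le hsub2 (by omega)).symm
    · rintro (r1 | r2 | r3 | r4 | r5)
      · exact Or.inl r1
      · exact Or.inr (Or.inr (Or.inl r2.1))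
      · exact Or.inr (Or.inl r3)
      · exact Or.inr (Or.inr (Or.inr (Or.inl r4)))
      · -- R5 implies (v)
        obtain ⟨j, hjI, rfl⟩ := r5
        have hjb : 1 ≤ j ∧ j ≤ d - 1 := Finset.mem_Icc.1 hjI
        refine Or.inr (Or.inr (Or.inr (Or.inr ⟨?_, ?_⟩)))
        · have : (Finset.Icc 1 (k+1) \ {j}) ∩ (Finset.Icc 1 (d-1)) = (Finset.Icc 1 (d-1)).erase j := by
            ext x
            simp only [Finset.mem_inter, Finset.mem_sdiff, Finset.mem_Icc,
              Finset.mem_singleton, Finset.mem_erase]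
            omega
          rw [this, Finset.card_erase_of_mem hjI, hIcard]
          omega
        · intro x hx
          rw [Finset.mem_Icc] at hx
          rw [Finset.mem_sdiff, Finset.mem_Icc, Finset.mem_singleton]
          omega
  rw [g0]
  -- split off the pieces one by one
  have t1 : ((((Finset.Icc 1 n).powersetCard k)).filter (fun F => (Finset.Icc 1 (d-1) ⊆ F ∧ (F ∩ Finset.Icc d (k-1)).Nonempty) ∨ ((Finset.Icc 1 (d-1) ∪ {k, k+1} ⊆ F ∧ F ∩ Finset.Icc d (k-1) = ∅) ∨ ((∃ i ∈ Finset.Icc (k+2) n, F = Finset.Icc 2 k ∪ {i}) ∨ ((∃ i ∈ Finset.Icc (k+2) n, F = Finset.Icc 2 (k-1) ∪ {k+1, i}) ∨ (∃ j ∈ Finset.Icc 1 (d-1), F = Finset.Icc 1 (k+1) \ {j})))))).card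
      = ((((Finset.Icc 1 n).powersetCard k)).filter (fun F => Finset.Icc 1 (d-1) ⊆ F ∧ (F ∩ Finset.Icc d (k-1)).Nonempty)).card
        + ((((Finset.Icc 1 n).powersetCard k)).filter (fun F => (Finset.Icc 1 (d-1) ∪ {k, k+1} ⊆ F ∧ F ∩ Finset.Icc d (k-1) = ∅) ∨ ((∃ i ∈ Finset.Icc (k+2) n, F = Finset.Icc 2 k ∪ {i}) ∨ ((∃ i ∈ Finset.Icc (k+2) n, F = Finset.Icc 2 (k-1) ∪ {k+1, i}) ∨ (∃ j ∈ Finset.Icc 1 (d-1), F = Finset.Icc 1 (k+1) \ {j}))))).card := by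
    refine filter_or_card ((Finset.Icc 1 n).powersetCard k) (fun F => Finset.Icc 1 (d-1) ⊆ F ∧ (F ∩ Finset.Icc d (k-1)).Nonempty) (fun F => (Finset.Icc 1 (d-1) ∪ {k, k+1} ⊆ F ∧ F ∩ Finset.Icc d (k-1) = ∅) ∨ ((∃ i ∈ Finset.Icc (k+2) n, F = Finset.Icc 2 k ∪ {i}) ∨ ((∃ i ∈ Finset.Icc (k+2) n, F = Finset.Icc 2 (k-1) ∪ {k+1, i}) ∨ (∃ j ∈ Finset.Icc 1 (d-1), F = Finset.Icc 1 (k+1) \ {j})))) _ _ _ (fun F _ h1 h2 => ?_)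
    obtain ⟨h1a, h1b⟩ := h1
    rcases h2 with r2 | r3 | r4 | r5
    · rw [r2.2] at h1b; exact Finset.not_nonempty_empty h1b
    · obtain ⟨i, hi, rfl⟩ := r3
      rw [Finset.mem_Icc] at hi
      have h1F : (1:ℕ) ∈ Finset.Icc 2 k ∪ {i} := h1a (Finset.mem_Icc.2 ⟨le_rfl, by omega⟩)
      rw [Finset.mem_union, Finset.mem_Icc, Finset.mem_singleton] at h1F
      omega
    · obtain ⟨i, hi, rfl⟩ := r4
      rw [Finset.mem_Icc] at hi
      have h1F : (1:ℕ) ∈ Finset.Icc 2 (k-1) ∪ {k+1, i} := h1a (Finset.mem_Icc.2 ⟨le_rfl, by omega⟩)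
      rw [Finset.mem_union, Finset.mem_Icc, Finset.mem_insert, Finset.mem_singleton] at h1F
      omega
    · obtain ⟨j, hjI, rfl⟩ := r5
      have hjb : 1 ≤ j ∧ j ≤ d - 1 := Finset.mem_Icc.1 hjI
      have : j ∈ Finset.Icc 1 (k+1) \ {j} := h1a hjI
      rw [Finset.mem_sdiff, Finset.mem_singleton] at this
      exact this.2 rfl
  have t2 : ((((Finset.Icc 1 n).powersetCard k)).filter (fun F => (Finset.Icc 1 (d-1) ∪ {k, k+1} ⊆ F ∧ F ∩ Finset.Icc d (k-1) = ∅) ∨ ((∃ i ∈ Finset.Icc (k+2) n, F = Finset.Icc 2 k ∪ {i}) ∨ ((∃ i ∈ Finset.Icc (k+2) n, F = Finset.Icc 2 (k-1) ∪ {k+1, i}) ∨ (∃ j ∈ Finset.Icc 1 (d-1), F = Finset.Icc 1 (k+1) \ {j}))))).card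
      = ((((Finset.Icc 1 n).powersetCard k)).filter (fun F => Finset.Icc 1 (d-1) ∪ {k, k+1} ⊆ F ∧ F ∩ Finset.Icc d (k-1) = ∅)).card
        + ((((Finset.Icc 1 n).powersetCard k)).filter (fun F => (∃ i ∈ Finset.Icc (k+2) n, F = Finset.Icc 2 k ∪ {i}) ∨ ((∃ i ∈ Finset.Icc (k+2) n, F = Finset.Icc 2 (k-1) ∪ {k+1, i}) ∨ (∃ j ∈ Finset.Icc 1 (d-1), F = Finset.Icc 1 (k+1) \ {j})))).card := by
    refine filter_or_card ((Finset.Icc 1 n).powersetCard k) (fun F => Finset.Icc 1 (d-1) ∪ {k, k+1} ⊆ F ∧ F ∩ Finset.Icc d (k-1) = ∅) (fun F => (∃ i ∈ Finset.Icc (k+2) n, F = Finset.Icc 2 k ∪ {i}) ∨ ((∃ i ∈ Finset.Icc (k+2) n, F = Finset.Icc 2 (k-1) ∪ {k+1, i}) ∨ (∃ j ∈ Finset.Icc 1 (d-1), F = Finset.Icc 1 (k+1) \ {j}))) _ _ _ (fun F _ h1 h2 => ?_)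
    obtain ⟨h1a, _⟩ := h1
    have h1I : Finset.Icc 1 (d-1) ⊆ F := (Finset.subset_union_left).trans h1a
    rcases h2 with r3 | r4 | r5
    · obtain ⟨i, hi, rfl⟩ := r3
      rw [Finset.mem_Icc] at hi
      have h1F : (1:ℕ) ∈ Finset.Icc 2 k ∪ {i} := h1I (Finset.mem_Icc.2 ⟨le_rfl, by omega⟩)
      rw [Finset.mem_union, Finset.mem_Icc, Finset.mem_singleton] at h1F
      omega
    · obtain ⟨i, hi, rfl⟩ := r4
      rw [Finset.mem_Icc] at hi
      have h1F : (1:ℕ) ∈ Finset.Icc 2 (k-1) ∪ {k+1, i} := h1I (Finset.mem_Icc.2 ⟨le_rfl, by omega⟩)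
      rw [Finset.mem_union, Finset.mem_Icc, Finset.mem_insert, Finset.mem_singleton] at h1F
      omega
    · obtain ⟨j, hjI, rfl⟩ := r5
      have : j ∈ Finset.Icc 1 (k+1) \ {j} := h1I hjI
      rw [Finset.mem_sdiff, Finset.mem_singleton] at this
      exact this.2 rfl
  have t3 : ((((Finset.Icc 1 n).powersetCard k)).filter (fun F => (∃ i ∈ Finset.Icc (k+2) n, F = Finset.Icc 2 k ∪ {i}) ∨ ((∃ i ∈ Finset.Icc (k+2) n, F = Finset.Icc 2 (k-1) ∪ {k+1, i}) ∨ (∃ j ∈ Finset.Icc 1 (d-1), F = Finset.Icc 1 (k+1) \ {j})))).card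
      = ((((Finset.Icc 1 n).powersetCard k)).filter (fun F => ∃ i ∈ Finset.Icc (k+2) n, F = Finset.Icc 2 k ∪ {i})).card
        + ((((Finset.Icc 1 n).powersetCard k)).filter (fun F => (∃ i ∈ Finset.Icc (k+2) n, F = Finset.Icc 2 (k-1) ∪ {k+1, i}) ∨ (∃ j ∈ Finset.Icc 1 (d-1), F = Finset.Icc 1 (k+1) \ {j}))).card := by
    refine filter_or_card ((Finset.Icc 1 n).powersetCard k) (fun F => ∃ i ∈ Finset.Icc (k+2) n, F = Finset.Icc 2 k ∪ {i}) (fun F => (∃ i ∈ Finset.Icc (k+2) n, F = Finset.Icc 2 (k-1) ∪ {k+1, i}) ∨ (∃ j ∈ Finset.Icc 1 (d-1), F = Finset.Icc 1 (k+1) \ {j})) _ _ _ (fun F _ h1 h2 => ?_)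
    obtain ⟨i, hi, rfl⟩ := h1
    rw [Finset.mem_Icc] at hi
    have hkmem : k ∈ Finset.Icc 2 k ∪ {i} :=
      Finset.mem_union_left _ (Finset.mem_Icc.2 ⟨by omega, le_rfl⟩)
    rcases h2 with r4 | r5
    · obtain ⟨i', hi', heq⟩ := r4
      rw [Finset.mem_Icc] at hi'
      rw [heq] at hkmem
      rw [Finset.mem_union, Finset.mem_Icc, Finset.mem_insert, Finset.mem_singleton] at hkmem
      omega
    · obtain ⟨j, hjI, heq⟩ := r5
      have hjb : 1 ≤ j ∧ j ≤ d - 1 := Finset.mem_Icc.1 hjI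
      have hk1 : (k+1) ∈ Finset.Icc 1 (k+1) \ {j} := by
        rw [Finset.mem_sdiff, Finset.mem_Icc, Finset.mem_singleton]
        omega
      rw [← heq, Finset.mem_union, Finset.mem_Icc, Finset.mem_singleton] at hk1
      omega
  have t4 : ((((Finset.Icc 1 n).powersetCard k)).filter (fun F => (∃ i ∈ Finset.Icc (k+2) n, F = Finset.Icc 2 (k-1) ∪ {k+1, i}) ∨ (∃ j ∈ Finset.Icc 1 (d-1), F = Finset.Icc 1 (k+1) \ {j}))).card
      = ((((Finset.Icc 1 n).powersetCard k)).filter (fun F => ∃ i ∈ Finset.Icc (k+2) n, F = Finset.Icc 2 (k-1) ∪ {k+1, i})).card + ((((Finset.Icc 1 n).powersetCard k)).filter (fun F => ∃ j ∈ Finset.Icc 1 (d-1), F = Finset.Icc 1 (k+1) \ {j})).card := by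
    refine filter_or_card ((Finset.Icc 1 n).powersetCard k) (fun F => ∃ i ∈ Finset.Icc (k+2) n, F = Finset.Icc 2 (k-1) ∪ {k+1, i}) (fun F => ∃ j ∈ Finset.Icc 1 (d-1), F = Finset.Icc 1 (k+1) \ {j}) _ _ _ (fun F _ h1 h2 => ?_)
    obtain ⟨i, hi, rfl⟩ := h1
    rw [Finset.mem_Icc] at hi
    obtain ⟨j, hjI, heq⟩ := h2
    have himem : i ∈ Finset.Icc 2 (k-1) ∪ {k+1, i} :=
      Finset.mem_union_right _ (by rw [Finset.mem_insert, Finset.mem_singleton]; right; rfl)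
    rw [heq, Finset.mem_sdiff, Finset.mem_Icc] at himem
    omega
  -- counts
  have c1 : ((((Finset.Icc 1 n).powersetCard k)).filter (fun F => Finset.Icc 1 (d-1) ⊆ F ∧ (F ∩ Finset.Icc d (k-1)).Nonempty)).card + (n - (k-d) - (d-1)).choose (k - (d-1))
      = (n - (d-1)).choose (k - (d-1)) := by
    have e1 : ((((Finset.Icc 1 n).powersetCard k)).filter (fun F => (Finset.Icc 1 (d-1) ⊆ F ∧ (F ∩ Finset.Icc d (k-1)).Nonempty) ∨ (Finset.Icc 1 (d-1) ⊆ F ∧ F ∩ Finset.Icc d (k-1) = ∅))).card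
        = ((((Finset.Icc 1 n).powersetCard k)).filter (fun F => Finset.Icc 1 (d-1) ⊆ F ∧ (F ∩ Finset.Icc d (k-1)).Nonempty)).card
          + ((((Finset.Icc 1 n).powersetCard k)).filter (fun F => Finset.Icc 1 (d-1) ⊆ F ∧ F ∩ Finset.Icc d (k-1) = ∅)).card := by
      refine filter_or_card ((Finset.Icc 1 n).powersetCard k) (fun F => Finset.Icc 1 (d-1) ⊆ F ∧ (F ∩ Finset.Icc d (k-1)).Nonempty) (fun F => Finset.Icc 1 (d-1) ⊆ F ∧ F ∩ Finset.Icc d (k-1) = ∅) _ _ _ (fun F _ h1 h2 => ?_)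
      obtain ⟨h1a, h1b⟩ := h1
      obtain ⟨h2a, h2b⟩ := h2
      rw [h2b] at h1b
      exact Finset.not_nonempty_empty h1b
    have e2 : (((Finset.Icc 1 n).powersetCard k)).filter (fun F => (Finset.Icc 1 (d-1) ⊆ F ∧ (F ∩ Finset.Icc d (k-1)).Nonempty) ∨ (Finset.Icc 1 (d-1) ⊆ F ∧ F ∩ Finset.Icc d (k-1) = ∅))
        = (((Finset.Icc 1 n).powersetCard k)).filter (fun F => Finset.Icc 1 (d-1) ⊆ F) := by
      refine filter_congr'' _ _ _ _ _ (fun F _ => ?_)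
      constructor
      · rintro (h | h) <;> exact h.1
      · intro h
        rcases Finset.eq_empty_or_nonempty (F ∩ Finset.Icc d (k-1)) with he | hne
        · exact Or.inr ⟨h, he⟩
        · exact Or.inl ⟨h, hne⟩
    have e3 : ((((Finset.Icc 1 n).powersetCard k)).filter (fun F => Finset.Icc 1 (d-1) ⊆ F)).card = (n - (d-1)).choose (k - (d-1)) := by
      rw [card_ss _ _ hIsub k (by omega : (Finset.Icc 1 (d-1)).card ≤ k), Nat.card_Icc, hIcard]
      norm_num
    have e4 : ((((Finset.Icc 1 n).powersetCard k)).filter (fun F => Finset.Icc 1 (d-1) ⊆ F ∧ F ∩ Finset.Icc d (k-1) = ∅)).card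
        = (n - (k-d) - (d-1)).choose (k - (d-1)) := by
      rw [card_ss_avoid n k _ _ hIsub hIW hWsub (by omega : (Finset.Icc 1 (d-1)).card ≤ k), hIcard, hWcard]
    have e2c := congrArg Finset.card e2
    omega
  have c2 : ((((Finset.Icc 1 n).powersetCard k)).filter (fun F => Finset.Icc 1 (d-1) ∪ {k, k+1} ⊆ F ∧ F ∩ Finset.Icc d (k-1) = ∅)).card = (n - (k-d) - (d+1)).choose (k - (d+1)) := by
    have hS2sub : (Finset.Icc 1 (d-1)) ∪ {k, k+1} ⊆ Finset.Icc 1 n := by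
      apply Finset.union_subset hIsub
      intro x hx
      rw [Finset.mem_insert, Finset.mem_singleton] at hx
      rw [Finset.mem_Icc]
      omega
    have hS2W : Disjoint ((Finset.Icc 1 (d-1)) ∪ {k, k+1}) (Finset.Icc d (k-1)) := by
      rw [Finset.disjoint_left]
      intro a ha hb
      rw [Finset.mem_Icc] at hb
      rcases Finset.mem_union.1 ha with h | h
      · rw [Finset.mem_Icc] at h; omega
      · rw [Finset.mem_insert, Finset.mem_singleton] at h; omega
    rw [card_ss_avoid n k _ _ hS2sub hS2W hWsub (by omega : ((Finset.Icc 1 (d-1)) ∪ {k, k+1}).card ≤ k),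
      hS2card, hWcard]
  have c3 : ((((Finset.Icc 1 n).powersetCard k)).filter (fun F => ∃ i ∈ Finset.Icc (k+2) n, F = Finset.Icc 2 k ∪ {i})).card = n - k - 1 := by
    refine Eq.trans (filter_image_card ((Finset.Icc 1 n).powersetCard k) (Finset.Icc (k+2) n)
      (fun i => Finset.Icc 2 k ∪ {i}) _ (fun i hi => ?_) (fun i hi j hj hij => ?_)) ?_
    · rw [Finset.mem_Icc] at hi
      rw [Finset.mem_powersetCard]
      constructor
      · apply Finset.union_subset (Finset.Icc_subset_Icc (by omega) (by omega))
        intro x hx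
        rw [Finset.mem_singleton] at hx
        rw [Finset.mem_Icc]
        omega
      · rw [Finset.card_union_of_disjoint (by
          rw [Finset.disjoint_left]
          intro a ha hb
          rw [Finset.mem_Icc] at ha
          rw [Finset.mem_singleton] at hb
          omega), Nat.card_Icc, Finset.card_singleton]
        omega
    · rw [Finset.mem_Icc] at hi hj
      have hij' : Finset.Icc 2 k ∪ {i} = Finset.Icc 2 k ∪ {j} := hij
      have : i ∈ Finset.Icc 2 k ∪ {j} := by
        rw [← hij']
        exact Finset.mem_union_right _ (Finset.mem_singleton_self i)
      rw [Finset.mem_union, Finset.mem_Icc, Finset.mem_singleton] at this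
      omega
    · rw [Nat.card_Icc]; omega
  have c4 : ((((Finset.Icc 1 n).powersetCard k)).filter (fun F => ∃ i ∈ Finset.Icc (k+2) n, F = Finset.Icc 2 (k-1) ∪ {k+1, i})).card = n - k - 1 := by
    refine Eq.trans (filter_image_card ((Finset.Icc 1 n).powersetCard k) (Finset.Icc (k+2) n)
      (fun i => Finset.Icc 2 (k-1) ∪ {k+1, i}) _ (fun i hi => ?_) (fun i hi j hj hij => ?_)) ?_
    · rw [Finset.mem_Icc] at hi
      rw [Finset.mem_powersetCard]
      constructor
      · apply Finset.union_subset (Finset.Icc_subset_Icc (by omega) (by omega))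
        intro x hx
        rw [Finset.mem_insert, Finset.mem_singleton] at hx
        rw [Finset.mem_Icc]
        omega
      · rw [Finset.card_union_of_disjoint (by
          rw [Finset.disjoint_left]
          intro a ha hb
          rw [Finset.mem_Icc] at ha
          rw [Finset.mem_insert, Finset.mem_singleton] at hb
          omega), Nat.card_Icc, Finset.card_insert_of_notMem (by
            rw [Finset.mem_singleton]; omega), Finset.card_singleton]
        omega
    · rw [Finset.mem_Icc] at hi hj
      have hij' : Finset.Icc 2 (k-1) ∪ {k+1, i} = Finset.Icc 2 (k-1) ∪ {k+1, j} := hij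
      have : i ∈ Finset.Icc 2 (k-1) ∪ {k+1, j} := by
        rw [← hij']
        exact Finset.mem_union_right _ (by rw [Finset.mem_insert, Finset.mem_singleton]; right; rfl)
      rw [Finset.mem_union, Finset.mem_Icc, Finset.mem_insert, Finset.mem_singleton] at this
      omega
    · rw [Nat.card_Icc]; omega
  have c5 : ((((Finset.Icc 1 n).powersetCard k)).filter (fun F => ∃ j ∈ Finset.Icc 1 (d-1), F = Finset.Icc 1 (k+1) \ {j})).card = d - 1 := by
    refine Eq.trans (filter_image_card ((Finset.Icc 1 n).powersetCard k) (Finset.Icc 1 (d-1))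
      (fun j => Finset.Icc 1 (k+1) \ {j}) _ (fun j hj => ?_) (fun i hi j hj hij => ?_)) ?_
    · rw [Finset.mem_Icc] at hj
      rw [Finset.mem_powersetCard]
      constructor
      · exact (Finset.sdiff_subset).trans (Finset.Icc_subset_Icc le_rfl (by omega))
      · rw [Finset.card_sdiff_of_subset (by
          intro x hx
          rw [Finset.mem_singleton] at hx
          subst hx
          exact Finset.mem_Icc.2 ⟨by omega, by omega⟩), Nat.card_Icc, Finset.card_singleton]
        omega
    · rw [Finset.mem_Icc] at hi hj
      have hjmem : j ∈ Finset.Icc 1 (k+1) := Finset.mem_Icc.2 ⟨by omega, by omega⟩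
      have hij' : Finset.Icc 1 (k+1) \ {i} = Finset.Icc 1 (k+1) \ {j} := hij
      have hnot : j ∉ Finset.Icc 1 (k+1) \ {j} := by simp
      rw [← hij'] at hnot
      rw [Finset.mem_sdiff, Finset.mem_singleton] at hnot
      push_neg at hnot
      exact (hnot hjmem).symm
    · rw [Nat.card_Icc]; omega
  omega

set_option maxHeartbeats 1000000 in
theorem stmt18 (d : ℕ) (hd : 3 ≤ d) :
    (∀ n k : ℕ, d + 1 ≤ k → 2*k - d + 1 ≤ n →
      (famG n k d).card < (famH n k d (k - d + 1)).card) ∧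
    (∀ n k : ℕ, d + 4 ≤ k → max (2*k + 6) (24*(d-1)) < n →
      (famH n k d (k - d)).card < (famG n k d).card) ∧
    (∀ n k : ℕ, (k = d + 2 ∨ k = d + 3) → 2*k - d + 2 ≤ n →
      (famG n k d).card < (famH n k d (k - d)).card) := by
  refine ⟨?_, ?_, ?_⟩
  · -- Part 1
    intro n k hk hn
    have hH := famH_card n k d (k-d+1) hd (by omega) (by omega) (by omega)
    have hG := famG_card n k d hd (by omega) (by omega)
    rw [show n - (k-d+1) - (d-1) = n - k by omega,
        show k - (d-1) = (k-d)+1 by omega,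
        show n - 1 - (d-2+(k-d+1)) = n - k by omega,
        show k - (d-2+(k-d+1)) = 1 by omega,
        Nat.choose_one_right] at hH
    rw [show n - (k-d) - (d-1) = (n-k)+1 by omega,
        show k - (d-1) = (k-d)+1 by omega,
        show n - (k-d) - (d+1) = n-k-1 by omega,
        show k - (d+1) = k-d-1 by omega] at hG
    have p1 := Nat.choose_succ_succ (n-k) (k-d)
    have p2 := Nat.choose_succ_succ (n-k-1) (k-d-1)
    simp only [Nat.succ_eq_add_one] at p1 p2
    rw [show n-k-1+1 = n-k by omega, show k-d-1+1 = k-d by omega] at p2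
    have hX : 1 ≤ (n-k-1).choose (k-d) := Nat.choose_pos (by omega)
    have key : 2*(n-k-1) + (d-1) < (d-1)*(n-k) + (n-k-1).choose (k-d) := by
      obtain ⟨X, hXe⟩ : ∃ X, (n-k-1).choose (k-d) = X := ⟨_, rfl⟩
      rw [hXe] at hX ⊢
      obtain ⟨m, hm⟩ : ∃ m, n - k = m + 2 := ⟨n-k-2, by omega⟩
      obtain ⟨e, he⟩ : ∃ e, d = e + 3 := ⟨d-3, by omega⟩
      rw [show n-k-1 = m+1 by omega, hm, show d - 1 = e + 2 by omega]
      nlinarith [hX]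
    omega
  · -- Part 2
    intro n k hk hn
    have hn1 : 2*k + 6 < n := lt_of_le_of_lt (le_max_left _ _) hn
    have hn2 : 24*(d-1) < n := lt_of_le_of_lt (le_max_right _ _) hn
    have hH := famH_card n k d (k-d) hd (by omega) (by omega) (by omega)
    have hG := famG_card n k d hd (by omega) (by omega)
    rw [show n - (k-d) - (d-1) = (n-k)+1 by omega,
        show k - (d-1) = (k-d)+1 by omega,
        show n - 1 - (d-2+(k-d)) = (n-k-1)+2 by omega,
        show k - (d-2+(k-d)) = 2 by omega] at hH
    rw [show n - (k-d) - (d-1) = (n-k)+1 by omega,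
        show k - (d-1) = (k-d)+1 by omega,
        show n - (k-d) - (d+1) = n-k-1 by omega,
        show k - (d+1) = k-d-1 by omega] at hG
    have key2 : (d-1) * (((n-k-1)+2).choose 2)
        < (n-k-1).choose (k-d-1) + (n-k-1) + (n-k-1) + (d-1) := by
      have hch : (n-k-1).choose 3 ≤ (n-k-1).choose (k-d-1) :=
        choose_three_le (by omega) (by omega)
      have main : (d-1) * (((n-k-1)+2).choose 2) < (n-k-1).choose 3 := by
        have h2c := two_choose (n-k-1)
        have h6c := six_choose (n-k-4)
        rw [show (n-k-4)+3 = n-k-1 by omega] at h6c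
        obtain ⟨c2, hc2⟩ : ∃ c2, ((n-k-1)+2).choose 2 = c2 := ⟨_, rfl⟩
        obtain ⟨c3, hc3⟩ : ∃ c3, (n-k-1).choose 3 = c3 := ⟨_, rfl⟩
        rw [hc2] at h2c ⊢
        rw [hc3] at h6c ⊢
        obtain ⟨b, hb⟩ : ∃ b, n - k - 4 = b := ⟨_, rfl⟩
        rw [show (n-k-1)+2 = b+5 by omega, show (n-k-1)+1 = b+4 by omega] at h2c
        rw [show n-k-1 = b+3 by omega, show (n-k-4)+2 = b+2 by omega,
          show (n-k-4)+1 = b+1 by omega] at h6c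
        have hball : 12*(d-1) ≤ b := by omega
        have s0 : 24*((d-1)*c2) = 12*(d-1)*(2*c2) := by ring
        have s1 : 12*(d-1)*(2*c2) ≤ b*(2*c2) := Nat.mul_le_mul_right _ hball
        rw [h2c] at s1 s0
        have s2 : b*((b+5)*(b+4)) < 4*((b+3)*((b+3-1))*((b+3-2))) := by
          rw [show b+3-1 = b+2 by omega, show b+3-2 = b+1 by omega]
          nlinarith
        have s3 : 4*((b+3)*((b+3-1))*((b+3-2))) = 24*c3 := by
          rw [show b+3-1 = b+2 by omega, show b+3-2 = b+1 by omega, ← h6c]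
          ring
        have : 24*((d-1)*c2) < 24*c3 := by omega
        omega
      omega
    omega
  · -- Part 3
    intro n k hk hn
    have hk2 : d + 2 ≤ k := by omega
    have hH := famH_card n k d (k-d) hd (by omega) (by omega) (by omega)
    have hG := famG_card n k d hd (by omega) (by omega)
    rw [show n - (k-d) - (d-1) = (n-k)+1 by omega,
        show k - (d-1) = (k-d)+1 by omega,
        show n - 1 - (d-2+(k-d)) = (n-k-1)+2 by omega,
        show k - (d-2+(k-d)) = 2 by omega] at hH
    rw [show n - (k-d) - (d-1) = (n-k)+1 by omega,
        show k - (d-1) = (k-d)+1 by omega,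
        show n - (k-d) - (d+1) = n-k-1 by omega,
        show k - (d+1) = k-d-1 by omega] at hG
    have key3 : (n-k-1).choose (k-d-1) + (n-k-1) + (n-k-1) + (d-1)
        < (d-1) * (((n-k-1)+2).choose 2) := by
      have h2c := two_choose (n-k-1)
      obtain ⟨c2, hc2⟩ : ∃ c2, ((n-k-1)+2).choose 2 = c2 := ⟨_, rfl⟩
      rw [hc2] at h2c ⊢
      rcases hk with h | h
      · rw [show k-d-1 = 1 by omega, Nat.choose_one_right]
        obtain ⟨m, hm⟩ : ∃ m, n - k - 1 = m + 3 := ⟨n-k-4, by omega⟩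
        obtain ⟨e, he⟩ : ∃ e, d - 1 = e + 2 := ⟨d-3, by omega⟩
        rw [hm, show (m+3)+2 = m+5 by omega, show (m+3)+1 = m+4 by omega] at h2c
        rw [hm, he]
        have h3 : 2*((e+2)*c2) = e*((m+5)*(m+4)) + 2*((m+5)*(m+4)) := by rw [← h2c]; ring
        have h4 : e*20 ≤ e*((m+5)*(m+4)) := Nat.mul_le_mul_left e (by nlinarith)
        nlinarith [h3, h4]
      · rw [show k-d-1 = 2 by omega]
        have h2c' := two_choose (n-k-3)
        rw [show (n-k-3)+2 = n-k-1 by omega] at h2c'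
        obtain ⟨c2', hc2'⟩ : ∃ c2', (n-k-1).choose 2 = c2' := ⟨_, rfl⟩
        rw [hc2'] at h2c' ⊢
        obtain ⟨m, hm⟩ : ∃ m, n - k - 1 = m + 4 := ⟨n-k-5, by omega⟩
        obtain ⟨e, he⟩ : ∃ e, d - 1 = e + 2 := ⟨d-3, by omega⟩
        rw [hm, show (m+4)+2 = m+6 by omega, show (m+4)+1 = m+5 by omega] at h2c
        rw [show (n-k-3)+1 = m+3 by omega, hm] at h2c'
        rw [hm, he]
        have h3 : 2*((e+2)*c2) = e*((m+6)*(m+5)) + 2*((m+6)*(m+5)) := by rw [← h2c]; ring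
        have h4 : e*30 ≤ e*((m+6)*(m+5)) := Nat.mul_le_mul_left e (by nlinarith)
        nlinarith [h3, h4, h2c']
    omega
end

section
/- Let k ≥ d+1 ≥ 4 and 2 ≤ l ≤ k-d+2. For any n > kd, the family H(k,d,l) of k-element subsets of [n] is a maximal d-wise intersecting family; that is, H(k,d,l) is d-wise intersecting and, for every k-element subset A of [n] not in H(k,d,l), the family H(k,d,l) ∪ {A} is not d-wise intersecting. -/
open Finset

attribute [local instance] Classical.propDecidable

section Aux

lemma mem_famH {n k d l : ℕ} {F : Finset ℕ} :
    F ∈ famH n k d l ↔ (F ⊆ Finset.Icc 1 n ∧ F.card = k) ∧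
      ((Finset.Icc 1 (d-1) ⊆ F ∧ (F ∩ Finset.Icc d (d+l-1)).Nonempty) ∨
       ((F ∩ Finset.Icc 1 (d-1)).card = d-2 ∧ Finset.Icc d (d+l-1) ⊆ F)) := by
  simp [famH, Finset.mem_filter, Finset.mem_powersetCard]

def auxB (d l : ℕ) (R' : Finset ℕ) (j : ℕ) : Finset ℕ :=
  (Finset.Icc 1 (d-1) \ {j}) ∪ Finset.Icc d (d+l-1) ∪ R'

def auxC (d : ℕ) (R : Finset ℕ) (y : ℕ) : Finset ℕ :=
  insert y (Finset.Icc 1 (d-1)) ∪ R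

lemma auxB_mem {n k d l : ℕ} (hd : 3 ≤ d) (hl2 : 2 ≤ l) (hlk : l + d ≤ k + 2)
    (hn : d + l - 1 ≤ n) {R' : Finset ℕ}
    (hR' : ∀ x ∈ R', d + l - 1 < x ∧ x ≤ n) (hcard : R'.card = k + 2 - d - l)
    {j : ℕ} (hj1 : 1 ≤ j) (hj2 : j ≤ d - 1) :
    auxB d l R' j ∈ famH n k d l := by
  rw [mem_famH]
  have hsub : auxB d l R' j ⊆ Finset.Icc 1 n := by
    intro x hx
    simp only [auxB, mem_union, mem_sdiff, mem_Icc, mem_singleton] at hx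
    simp only [mem_Icc]
    rcases hx with (⟨h, -⟩ | h) | h
    · omega
    · omega
    · have := hR' x h; omega
  have hd1 : (Finset.Icc 1 (d-1) \ {j}).card = d - 2 := by
    rw [Finset.card_sdiff_of_subset (Finset.singleton_subset_iff.mpr (Finset.mem_Icc.mpr ⟨hj1, hj2⟩))]
    rw [Finset.card_singleton, Nat.card_Icc]
    omega
  have hdisj1 : Disjoint (Finset.Icc 1 (d-1) \ {j}) (Finset.Icc d (d+l-1)) := by
    rw [Finset.disjoint_left]
    intro a ha hb
    simp only [mem_sdiff, mem_Icc, mem_singleton] at ha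
    simp only [mem_Icc] at hb
    omega
  have hdisj2 : Disjoint ((Finset.Icc 1 (d-1) \ {j}) ∪ Finset.Icc d (d+l-1)) R' := by
    rw [Finset.disjoint_right]
    intro a ha hb
    have h1 := (hR' a ha).1
    simp only [mem_union, mem_sdiff, mem_Icc, mem_singleton] at hb
    omega
  have hcardB : (auxB d l R' j).card = k := by
    rw [auxB, Finset.card_union_of_disjoint hdisj2, Finset.card_union_of_disjoint hdisj1,
      hd1, hcard, Nat.card_Icc]
    omega
  refine ⟨⟨hsub, hcardB⟩, Or.inr ⟨?_, ?_⟩⟩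
  · have heq : auxB d l R' j ∩ Finset.Icc 1 (d-1) = Finset.Icc 1 (d-1) \ {j} := by
      ext x
      simp only [auxB, mem_inter, mem_union, mem_sdiff, mem_Icc, mem_singleton]
      constructor
      · rintro ⟨(h | h) | h, hx⟩
        · exact h
        · omega
        · have := (hR' x h).1; omega
      · intro h
        exact ⟨Or.inl (Or.inl h), h.1⟩
    rw [heq, hd1]
  · intro x hx
    simp only [auxB, mem_union]
    exact Or.inl (Or.inr hx)

lemma auxC_mem {n k d l : ℕ} (hd : 3 ≤ d) (hk : d ≤ k)
    (hn : d + l - 1 ≤ n) {R : Finset ℕ}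
    (hR : ∀ x ∈ R, d + l - 1 < x ∧ x ≤ n) (hcard : R.card = k - d)
    {y : ℕ} (hy1 : d ≤ y) (hy2 : y ≤ d + l - 1) :
    auxC d R y ∈ famH n k d l := by
  rw [mem_famH]
  have hyI : y ∉ Finset.Icc 1 (d-1) := by
    simp only [mem_Icc]; omega
  have hsub : auxC d R y ⊆ Finset.Icc 1 n := by
    intro x hx
    simp only [auxC, mem_union, mem_insert, mem_Icc] at hx
    simp only [mem_Icc]
    rcases hx with (rfl | h) | h
    · omega
    · omega
    · have := hR x h; omega
  have hdisj : Disjoint (insert y (Finset.Icc 1 (d-1))) R := by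
    rw [Finset.disjoint_right]
    intro a ha hb
    have h1 := (hR a ha).1
    simp only [mem_insert, mem_Icc] at hb
    omega
  have hcardC : (auxC d R y).card = k := by
    rw [auxC, Finset.card_union_of_disjoint hdisj, Finset.card_insert_of_notMem hyI,
      Nat.card_Icc, hcard]
    omega
  refine ⟨⟨hsub, hcardC⟩, Or.inl ⟨?_, ⟨y, ?_⟩⟩⟩
  · intro x hx
    simp only [auxC, mem_union, mem_insert]
    exact Or.inl (Or.inr hx)
  · exact Finset.mem_inter.mpr ⟨Finset.mem_union_left _ (Finset.mem_insert_self _ _),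
      Finset.mem_Icc.mpr ⟨hy1, hy2⟩⟩

end Aux

theorem stmt19 (n k d l : ℕ) (hd : 3 ≤ d) (hk : d + 1 ≤ k)
    (hl2 : 2 ≤ l) (hlk : l + d ≤ k + 2) (hn : k * d < n) :
    DWise d (famH n k d l) ∧
    ∀ A : Finset ℕ, A ⊆ Finset.Icc 1 n → A.card = k → A ∉ famH n k d l →
      ¬ DWise d (insert A (famH n k d l)) := by
  have h3k : 3 * k < n := by
    calc 3 * k = k * 3 := by ring
      _ ≤ k * d := Nat.mul_le_mul_left k hd
      _ < n := hn
  have hn' : d + l - 1 ≤ n := by omega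
  constructor
  · -- d-wise intersecting
    intro f hf
    have hcond : ∀ i, ((Finset.Icc 1 (d-1) ⊆ f i ∧ ((f i) ∩ Finset.Icc d (d+l-1)).Nonempty) ∨
        (((f i) ∩ Finset.Icc 1 (d-1)).card = d-2 ∧ Finset.Icc d (d+l-1) ⊆ f i)) :=
      fun i => (mem_famH.mp (hf i)).2
    by_cases hex : ∃ x ∈ Finset.Icc 1 (d-1), ∀ i, x ∈ f i
    · obtain ⟨x, -, hx⟩ := hex
      exact ⟨x, hx⟩
    push_neg at hex
    have hex' : ∀ x : ℕ, ∃ i : Fin d, x ∈ Finset.Icc 1 (d-1) → x ∉ f i := by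
      intro x
      by_cases h : x ∈ Finset.Icc 1 (d-1)
      · obtain ⟨i, hi⟩ := hex x h
        exact ⟨i, fun _ => hi⟩
      · exact ⟨⟨0, by omega⟩, fun h' => absurd h' h⟩
    choose g hg using hex'
    have hmaps : ∀ x ∈ Finset.Icc 1 (d-1),
        g x ∈ Finset.univ.filter (fun i : Fin d => ¬ Finset.Icc 1 (d-1) ⊆ f i) := by
      intro x hx
      simp only [Finset.mem_filter, Finset.mem_univ, true_and]
      intro hsub
      exact (hg x hx) (hsub hx)
    have hinj : Set.InjOn g (Finset.Icc 1 (d-1)) := by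
      intro x1 hx1 x2 hx2 heq
      by_contra hne
      simp only [Finset.coe_Icc, Set.mem_Icc] at hx1 hx2
      have hm1 : x1 ∉ f (g x1) := hg x1 (Finset.mem_Icc.mpr hx1)
      have hm2 : x2 ∉ f (g x1) := by
        rw [heq]; exact hg x2 (Finset.mem_Icc.mpr hx2)
      rcases hcond (g x1) with ⟨hsub, -⟩ | ⟨hcard, -⟩
      · exact hm1 (hsub (Finset.mem_Icc.mpr hx1))
      · have hss : f (g x1) ∩ Finset.Icc 1 (d-1) ⊆ Finset.Icc 1 (d-1) \ {x1, x2} := by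
          intro z hz
          rw [Finset.mem_inter] at hz
          simp only [Finset.mem_sdiff, Finset.mem_insert, Finset.mem_singleton]
          refine ⟨hz.2, ?_⟩
          rintro (rfl | rfl)
          exacts [hm1 hz.1, hm2 hz.1]
        have hsub12 : ({x1, x2} : Finset ℕ) ⊆ Finset.Icc 1 (d-1) := by
          intro z hz
          simp only [Finset.mem_insert, Finset.mem_singleton] at hz
          rcases hz with rfl | rfl
          · exact Finset.mem_Icc.mpr hx1
          · exact Finset.mem_Icc.mpr hx2
        have hcs := Finset.card_le_card hss
        rw [Finset.card_sdiff_of_subset hsub12, Finset.card_pair hne, Nat.card_Icc] at hcs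
        omega
    have hT2 : d - 1 ≤ (Finset.univ.filter (fun i : Fin d => ¬ Finset.Icc 1 (d-1) ⊆ f i)).card := by
      have := Finset.card_le_card_of_injOn g hmaps hinj
      rw [Nat.card_Icc] at this
      omega
    have key : ∀ i j : Fin d, Finset.Icc 1 (d-1) ⊆ f i → Finset.Icc 1 (d-1) ⊆ f j → i = j := by
      intro i j hi hj
      by_contra hne
      have hdisj : Disjoint ({i, j} : Finset (Fin d))
          (Finset.univ.filter (fun i : Fin d => ¬ Finset.Icc 1 (d-1) ⊆ f i)) := by
        rw [Finset.disjoint_left]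
        intro a ha hb
        simp only [Finset.mem_insert, Finset.mem_singleton] at ha
        simp only [Finset.mem_filter, Finset.mem_univ, true_and] at hb
        rcases ha with rfl | rfl
        · exact hb hi
        · exact hb hj
      have hcu := Finset.card_le_univ (({i, j} : Finset (Fin d)) ∪
        (Finset.univ.filter (fun i : Fin d => ¬ Finset.Icc 1 (d-1) ⊆ f i)))
      rw [Finset.card_union_of_disjoint hdisj, Finset.card_pair hne] at hcu
      simp only [Finset.card_univ, Fintype.card_fin] at hcu
      omega
    by_cases h1 : ∃ i0 : Fin d, Finset.Icc 1 (d-1) ⊆ f i0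
    · obtain ⟨i0, hi0⟩ := h1
      obtain ⟨z, hz⟩ : ((f i0) ∩ Finset.Icc d (d+l-1)).Nonempty := by
        rcases hcond i0 with ⟨-, h⟩ | ⟨hc, -⟩
        · exact h
        · exfalso
          rw [Finset.inter_eq_right.mpr hi0, Nat.card_Icc] at hc
          omega
      rw [Finset.mem_inter] at hz
      refine ⟨z, fun i => ?_⟩
      rcases hcond i with ⟨hs, -⟩ | ⟨-, hs⟩
      · rw [key i i0 hs hi0]
        exact hz.1
      · exact hs hz.2
    · push_neg at h1
      refine ⟨d, fun i => ?_⟩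
      rcases hcond i with ⟨hs, -⟩ | ⟨-, hs⟩
      · exact absurd hs (h1 i)
      · exact hs (Finset.mem_Icc.mpr (by omega))
  · -- maximality
    intro A hAsub hAcard hAnot hDW
    have hnA : ¬((Finset.Icc 1 (d-1) ⊆ A ∧ (A ∩ Finset.Icc d (d+l-1)).Nonempty) ∨
        ((A ∩ Finset.Icc 1 (d-1)).card = d-2 ∧ Finset.Icc d (d+l-1) ⊆ A)) :=
      fun h => hAnot (mem_famH.mpr ⟨⟨hAsub, hAcard⟩, h⟩)
    rw [not_or] at hnA
    obtain ⟨hnA1, hnA2⟩ := hnA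
    -- the pool of fresh elements
    have hPcard : k - d ≤ ((Finset.Icc 1 n) \ (A ∪ Finset.Icc 1 (d+l-1))).card := by
      have h1 := Finset.le_card_sdiff (A ∪ Finset.Icc 1 (d+l-1)) (Finset.Icc 1 n)
      have h2 : (A ∪ Finset.Icc 1 (d+l-1)).card ≤ k + (d+l-1) := by
        calc (A ∪ Finset.Icc 1 (d+l-1)).card ≤ A.card + (Finset.Icc 1 (d+l-1)).card :=
              Finset.card_union_le _ _
          _ = k + (d+l-1) := by rw [hAcard, Nat.card_Icc]; omega
      rw [Nat.card_Icc] at h1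
      omega
    obtain ⟨R, hRP, hRcard⟩ := Finset.exists_subset_card_eq hPcard
    obtain ⟨R', hR'R, hR'card⟩ := Finset.exists_subset_card_eq (s := R) (n := k + 2 - d - l) (by omega)
    have hRfact : ∀ x ∈ R, x ∉ A ∧ d + l - 1 < x ∧ x ≤ n := by
      intro x hx
      have h := hRP hx
      simp only [Finset.mem_sdiff, Finset.mem_union, Finset.mem_Icc, not_or] at h
      refine ⟨h.2.1, ?_, h.1.2⟩
      have h3 := h.2.2
      have h4 := h.1.1
      omega
    have hR'fact : ∀ x ∈ R', d + l - 1 < x ∧ x ≤ n := fun x hx => (hRfact x (hR'R hx)).2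
    have hBmem : ∀ j, 1 ≤ j → j ≤ d - 1 → auxB d l R' j ∈ famH n k d l :=
      fun j h1 h2 => auxB_mem hd hl2 hlk hn' hR'fact hR'card h1 h2
    have hCmem : ∀ y, d ≤ y → y ≤ d + l - 1 → auxC d R y ∈ famH n k d l :=
      fun y h1 h2 => auxC_mem hd (by omega) hn' (fun x hx => (hRfact x hx).2) hRcard h1 h2
    have hxB : ∀ x, x ∈ A → 1 ≤ x → x ≤ d - 1 → x ∉ auxB d l R' x := by
      intro x hxA h1 h2 hmem
      simp only [auxB] at hmem
      rcases Finset.mem_union.mp hmem with hm | hm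
      · rcases Finset.mem_union.mp hm with hm2 | hm2
        · exact (Finset.mem_sdiff.mp hm2).2 (Finset.mem_singleton_self x)
        · rw [Finset.mem_Icc] at hm2; omega
      · exact (hRfact x (hR'R hm)).1 hxA
    have hxC : ∀ x y, x ∈ A → x ∈ auxC d R y → x = y ∨ (1 ≤ x ∧ x ≤ d - 1) := by
      intro x y hxA hmem
      simp only [auxC, Finset.mem_union, Finset.mem_insert, Finset.mem_Icc] at hmem
      rcases hmem with (rfl | h) | h
      · exact Or.inl rfl
      · exact Or.inr h
      · exact absurd hxA (hRfact x h).1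
    by_cases hsubA : Finset.Icc 1 (d-1) ⊆ A
    · -- Shape A : all (d-1) type-2 sets
      have hAd : ∀ z, z ∈ A → ¬(d ≤ z ∧ z ≤ d+l-1) := by
        intro z hz hzr
        exact hnA1 ⟨hsubA, ⟨z, Finset.mem_inter.mpr ⟨hz, Finset.mem_Icc.mpr hzr⟩⟩⟩
      obtain ⟨x, hx⟩ := hDW (fun i : Fin d => if (i : ℕ) = 0 then A else auxB d l R' (i : ℕ))
        (by
          intro i
          by_cases h : (i : ℕ) = 0
          · simp only [if_pos h]
            exact Finset.mem_insert_self _ _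
          · simp only [if_neg h]
            exact Finset.mem_insert_of_mem (hBmem (i : ℕ) (by omega) (by omega)))
      have hxA : x ∈ A := by
        have h := hx ⟨0, by omega⟩
        simpa using h
      have hxd : ∀ j, 1 ≤ j → j ≤ d - 1 → x ∈ auxB d l R' j := by
        intro j h1 h2
        have h : x ∈ (if j = 0 then A else auxB d l R' j) := hx ⟨j, by omega⟩
        rwa [if_neg (by omega : ¬ j = 0)] at h
      have hx1 : x ∈ auxB d l R' 1 := hxd 1 le_rfl (by omega)
      have hxr : 1 ≤ x ∧ x ≤ d - 1 := by
        simp only [auxB, Finset.mem_union, Finset.mem_sdiff, Finset.mem_Icc,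
          Finset.mem_singleton] at hx1
        rcases hx1 with (⟨h, -⟩ | h) | h
        · exact h
        · exact absurd h (hAd x hxA)
        · exact absurd hxA (hRfact x (hR'R h)).1
      exact hxB x hxA hxr.1 hxr.2 (hxd x hxr.1 hxr.2)
    · obtain ⟨x0, hx0I, hx0A⟩ := Finset.not_subset.mp hsubA
      rw [Finset.mem_Icc] at hx0I
      by_cases hyex : ∃ y, (d ≤ y ∧ y ≤ d+l-1) ∧ y ∉ A
      · -- Shape B : one type-1 set with witness y ∉ A
        obtain ⟨y, hyr, hyA⟩ := hyex
        obtain ⟨x, hx⟩ := hDW (fun i : Fin d => if (i : ℕ) = 0 then A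
            else if (i : ℕ) ∈ A then auxB d l R' (i : ℕ) else auxC d R y)
          (by
            intro i
            by_cases h : (i : ℕ) = 0
            · simp only [if_pos h]
              exact Finset.mem_insert_self _ _
            · simp only [if_neg h]
              by_cases h2 : (i : ℕ) ∈ A
              · simp only [if_pos h2]
                exact Finset.mem_insert_of_mem (hBmem (i : ℕ) (by omega) (by omega))
              · simp only [if_neg h2]
                exact Finset.mem_insert_of_mem (hCmem y hyr.1 hyr.2))
        have hxA : x ∈ A := by
          have h := hx ⟨0, by omega⟩
          simpa using h
        have hxCy : x ∈ auxC d R y := by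
          have h : x ∈ (if x0 = 0 then A else if x0 ∈ A then auxB d l R' x0 else auxC d R y) :=
            hx ⟨x0, by omega⟩
          rwa [if_neg (by omega : ¬ x0 = 0), if_neg hx0A] at h
        have hxr : 1 ≤ x ∧ x ≤ d - 1 := by
          rcases hxC x y hxA hxCy with rfl | h
          · exact absurd hxA hyA
          · exact h
        have hxBx : x ∈ auxB d l R' x := by
          have h : x ∈ (if x = 0 then A else if x ∈ A then auxB d l R' x else auxC d R y) :=
            hx ⟨x, by omega⟩
          rwa [if_neg (by omega : ¬ x = 0), if_pos hxA] at h
        exact hxB x hxA hxr.1 hxr.2 hxBx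
      · -- Shape C : two type-1 sets with witnesses d and d+1
        push_neg at hyex
        have hIA : Finset.Icc d (d+l-1) ⊆ A := by
          intro z hz
          rw [Finset.mem_Icc] at hz
          exact hyex z hz
        have hne2 : (A ∩ Finset.Icc 1 (d-1)).card ≠ d - 2 := fun h => hnA2 ⟨h, hIA⟩
        have hle : (A ∩ Finset.Icc 1 (d-1)).card ≤ d - 1 := by
          have := Finset.card_le_card (Finset.inter_subset_right :
            A ∩ Finset.Icc 1 (d-1) ⊆ Finset.Icc 1 (d-1))
          rwa [Nat.card_Icc, Nat.add_sub_cancel] at this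
        have hne1 : (A ∩ Finset.Icc 1 (d-1)).card ≠ d - 1 := by
          intro h
          apply hsubA
          have heq : A ∩ Finset.Icc 1 (d-1) = Finset.Icc 1 (d-1) :=
            Finset.eq_of_subset_of_card_le Finset.inter_subset_right
              (by rw [Nat.card_Icc, h]; omega)
          intro z hz
          have hz2 : z ∈ A ∩ Finset.Icc 1 (d-1) := by rw [heq]; exact hz
          exact (Finset.mem_inter.mp hz2).1
        have hsd : 1 < (Finset.Icc 1 (d-1) \ A).card := by
          have h := Finset.card_inter_add_card_sdiff (Finset.Icc 1 (d-1)) A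
          rw [Finset.inter_comm, Nat.card_Icc] at h
          omega
        obtain ⟨x1, hx1m, x2, hx2m, hx12⟩ := Finset.one_lt_card.mp hsd
        rw [Finset.mem_sdiff, Finset.mem_Icc] at hx1m hx2m
        obtain ⟨⟨hx1a, hx1b⟩, hx1A⟩ := hx1m
        obtain ⟨⟨hx2a, hx2b⟩, hx2A⟩ := hx2m
        obtain ⟨x, hx⟩ := hDW (fun i : Fin d => if (i : ℕ) = 0 then A
            else if (i : ℕ) ∈ A then auxB d l R' (i : ℕ)
            else if (i : ℕ) = x2 then auxC d R (d+1) else auxC d R d)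
          (by
            intro i
            by_cases h : (i : ℕ) = 0
            · simp only [if_pos h]
              exact Finset.mem_insert_self _ _
            · simp only [if_neg h]
              by_cases h2 : (i : ℕ) ∈ A
              · simp only [if_pos h2]
                exact Finset.mem_insert_of_mem (hBmem (i : ℕ) (by omega) (by omega))
              · simp only [if_neg h2]
                by_cases h3 : (i : ℕ) = x2
                · simp only [if_pos h3]
                  exact Finset.mem_insert_of_mem (hCmem (d+1) (by omega) (by omega))
                · simp only [if_neg h3]
                  exact Finset.mem_insert_of_mem (hCmem d le_rfl (by omega)))
        have hxA : x ∈ A := by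
          have h := hx ⟨0, by omega⟩
          simpa using h
        have hxCd : x ∈ auxC d R d := by
          have h : x ∈ (if x1 = 0 then A else if x1 ∈ A then auxB d l R' x1
              else if x1 = x2 then auxC d R (d+1) else auxC d R d) := hx ⟨x1, by omega⟩
          rwa [if_neg (by omega : ¬ x1 = 0), if_neg hx1A, if_neg hx12] at h
        have hxCd1 : x ∈ auxC d R (d+1) := by
          have h : x ∈ (if x2 = 0 then A else if x2 ∈ A then auxB d l R' x2
              else if x2 = x2 then auxC d R (d+1) else auxC d R d) := hx ⟨x2, by omega⟩
          rwa [if_neg (by omega : ¬ x2 = 0), if_neg hx2A, if_pos rfl] at h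
        have hxr : 1 ≤ x ∧ x ≤ d - 1 := by
          rcases hxC x d hxA hxCd with h1 | h1
          · rcases hxC x (d+1) hxA hxCd1 with h2 | h2
            · omega
            · omega
          · exact h1
        have hxBx : x ∈ auxB d l R' x := by
          have h : x ∈ (if x = 0 then A else if x ∈ A then auxB d l R' x
              else if x = x2 then auxC d R (d+1) else auxC d R d) := hx ⟨x, by omega⟩
          rwa [if_neg (by omega : ¬ x = 0), if_pos hxA] at h
        exact hxB x hxA hxr.1 hxr.2 hxBx
end
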